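/- arXiv:0705.1701 — 7 statements merged into one kernel-verified Lean document; each statement's English description precedes it below -/
import Mathlib

section
/- The number of Dyck paths of length 2n (paths from 0 to 0 with steps ±1 staying nonnegative) that have exactly k up-steps occurring at odd time instants equals the Narayana number N(n,k) = (1/n) * C(n,k) * C(n,k-1). -/
/-- Number of up-steps among the first `t` steps of the path encoded by `f`
(`f i = true` means the step at time `i+1` is an up-step). -/
def upCount (f : ℕ → Bool) (t : ℕ) : ℕ :=
  ((Finset.range t).filter (fun i => f i = true)).card

/-- The level of the path after `t` steps. -/
def pathHeight (f : ℕ → Bool) (t : ℕ) : ℤ :=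
  2 * (upCount f t : ℤ) - (t : ℤ)

/-- `f` encodes a Dyck path of length `2*n`: the path starts and ends at `0`,
stays nonnegative, and `f` is normalized to be `false` beyond the path. -/
def IsDyckPath (n : ℕ) (f : ℕ → Bool) : Prop :=
  (∀ t, 2 * n ≤ t → f t = false) ∧ pathHeight f (2 * n) = 0 ∧
    ∀ t ≤ 2 * n, 0 ≤ pathHeight f t

/-- The number of up-steps occurring at odd time instants (times `1, 3, ...`,
i.e. step indices `0, 2, ...`). -/
def oddUpCount (n : ℕ) (f : ℕ → Bool) : ℕ :=
  ((Finset.range n).filter (fun m => f (2 * m) = true)).card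

/-- The set of Dyck paths of length `2*n` with exactly `k` odd up-steps. -/
def dyckSet (n k : ℕ) : Set (ℕ → Bool) :=
  {f | IsDyckPath n f ∧ oddUpCount n f = k}


/-!
Every Dyck path starts with an up-step. Reading the remaining steps in pairs
`(f (2m+1), f (2m+2))`, `m < n`, and weighting a pair by its number of up-steps minus one, the
height at time `2m + 1` is `1 + 2 ×` (the weight of the first `m` pairs). So the Dyck paths with
`k` odd up-steps correspond to the words of `n` pairs with `n - k` first and `k - 1` second
components up whose proper prefixes have nonnegative weight; every such word has weight `-1`.
By the cycle lemma, exactly one of the `n` rotations of a word of weight `-1` has nonnegative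
proper prefix sums, so rotating the good words hits each of the `C(n, n-k) C(n, k-1)` words
exactly `n` times.
-/

open Finset Function Fin.NatCast

section CycleLemma

variable {v : ℕ → ℤ} {n : ℕ}

lemma exists_first_argmin (f : ℕ → ℤ) (hn : 0 < n) :
    ∃ r < n, (∀ s < n, f r ≤ f s) ∧ ∀ s < r, f r < f s := by
  classical
  have hex : ∃ r, r < n ∧ ∀ s < n, f r ≤ f s := by
    obtain ⟨r, hr, hmin⟩ := (range n).exists_min_image f ⟨0, mem_range.2 hn⟩
    exact ⟨r, mem_range.1 hr, fun s hs => hmin s (mem_range.2 hs)⟩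
  obtain ⟨hlt, hmin⟩ := Nat.find_spec hex
  refine ⟨Nat.find hex, hlt, hmin, fun s hs => ?_⟩
  have hnot := Nat.find_min hex hs
  push Not at hnot
  obtain ⟨t, ht, hts⟩ := hnot (hs.trans hlt)
  exact (hmin t ht).trans_lt hts

lemma Function.Periodic.sum_range_add_period (hper : Periodic v n) (t : ℕ) :
    ∑ i ∈ range (t + n), v i = ∑ i ∈ range t, v i + ∑ i ∈ range n, v i := by
  rw [add_comm t, sum_range_add, add_comm]
  simp only [add_comm n]
  rw [sum_congr rfl fun x _ => hper x]

theorem existsUnique_sum_range_add_nonneg (hn : 0 < n) (hper : Periodic v n)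
    (hsum : ∑ i ∈ range n, v i = -1) :
    ∃! r, r < n ∧ ∀ t < n, 0 ≤ ∑ i ∈ range t, v (r + i) := by
  set S : ℕ → ℤ := fun t => ∑ i ∈ range t, v i
  have hwindow (r t : ℕ) : ∑ i ∈ range t, v (r + i) = S (r + t) - S r := by
    simp only [S, sum_range_add]; ring
  have hshift (t : ℕ) : S (t + n) = S t - 1 := by
    simp only [S, hper.sum_range_add_period, hsum]; ring
  simp only [hwindow, sub_nonneg]
  -- The first minimum of `S` on `[0, n)` is a good starting point.
  obtain ⟨r, hr, hmin, hfirst⟩ := exists_first_argmin S hn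
  have hgood : ∀ t < n, S r ≤ S (r + t) := by
    intro t ht
    rcases lt_or_ge (r + t) n with hrt | hrt
    · exact hmin _ hrt
    · have := hshift (r + t - n)
      rw [Nat.sub_add_cancel hrt] at this
      linarith [hfirst (r + t - n) (by omega)]
  -- Two good starting points `a < b` would give `S a ≤ S b ≤ S (a + n) = S a - 1`.
  have hnot (a b : ℕ) (hab : a < b) (hb : b < n) (ha : ∀ t < n, S a ≤ S (a + t))
      (hb' : ∀ t < n, S b ≤ S (b + t)) : False := by
    have h₁ := ha (b - a) (by omega)
    have h₂ := hb' (a + n - b) (by omega)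
    rw [Nat.add_sub_cancel' hab.le] at h₁
    rw [Nat.add_sub_cancel' (by omega), hshift] at h₂
    linarith
  refine ⟨r, ⟨hr, hgood⟩, fun s ⟨hs, hgood'⟩ => ?_⟩
  rcases lt_trichotomy s r with h | h | h
  · exact (hnot s r h hr hgood' hgood).elim
  · exact h
  · exact (hnot r s h hs hgood hgood').elim

end CycleLemma

section Rotation

variable {α : Type*} (v : α → ℤ) {n : ℕ} [NeZero n]

def rotateWord (r : Fin n) (w : Fin n → α) : Fin n → α := fun i => w (i + r)

lemma rotateWord_rotateWord (r s : Fin n) (w : Fin n → α) :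
    rotateWord r (rotateWord s w) = rotateWord (r + s) w := by
  funext i; simp only [rotateWord, add_assoc]

lemma rotateWord_neg_rotateWord (r : Fin n) (w : Fin n → α) :
    rotateWord (-r) (rotateWord r w) = w := by
  rw [rotateWord_rotateWord, neg_add_cancel]
  funext i; simp only [rotateWord, add_zero]

def HasNonnegPrefixSums (w : Fin n → α) : Prop :=
  ∀ t < n, 0 ≤ ∑ i ∈ range t, v (w (i : Fin n))

instance : DecidablePred (HasNonnegPrefixSums (n := n) v) :=
  fun _ => inferInstanceAs (Decidable (∀ t < n, _))

lemma periodic_comp_natCast (w : Fin n → α) : Periodic (fun i : ℕ => v (w (i : Fin n))) n := by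
  intro i; simp only [Nat.cast_add, Fin.natCast_self, add_zero]

lemma sum_range_rotateWord (r : Fin n) (w : Fin n → α) (t : ℕ) :
    ∑ i ∈ range t, v (rotateWord r w (i : Fin n))
      = ∑ i ∈ range t, v (w ((r.val + i : ℕ) : Fin n)) := by
  simp only [rotateWord, Nat.cast_add, Fin.cast_val_eq_self, add_comm]

lemma sum_range_comp_natCast (w : Fin n → α) :
    ∑ i ∈ range n, v (w (i : Fin n)) = ∑ i, v (w i) := by
  simpa only [Fin.cast_val_eq_self] using
    (Fin.sum_univ_eq_sum_range (fun i => v (w (i : Fin n))) n).symm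

lemma HasNonnegPrefixSums.apply_last_neg {n : ℕ} {w : Fin (n + 1) → α}
    (hw : HasNonnegPrefixSums v w) (hsum : ∑ i, v (w i) = -1) : v (w (Fin.last n)) < 0 := by
  have hprefix := hw n n.lt_add_one
  rw [← sum_range_comp_natCast, sum_range_succ, Fin.natCast_eq_last] at hsum
  omega

theorem existsUnique_hasNonnegPrefixSums_rotateWord {w : Fin n → α}
    (hsum : ∑ i, v (w i) = -1) : ∃! r : Fin n, HasNonnegPrefixSums v (rotateWord r w) := by
  rw [← sum_range_comp_natCast] at hsum
  obtain ⟨r, ⟨hr, hgood⟩, huniq⟩ := existsUnique_sum_range_add_nonneg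
    (Nat.pos_of_neZero n) (periodic_comp_natCast v w) hsum
  refine ⟨⟨r, hr⟩, fun t ht => ?_,
    fun s hs => Fin.ext (huniq s ⟨s.isLt, fun t ht => ?_⟩)⟩
  · simpa only [sum_range_rotateWord] using hgood t ht
  · simpa only [sum_range_rotateWord] using hs t ht

theorem card_eq_mul_card_filter_hasNonnegPrefixSums (W : Finset (Fin n → α))
    (hrot : ∀ w ∈ W, ∀ r, rotateWord r w ∈ W) (hsum : ∀ w ∈ W, ∑ i, v (w i) = -1) :
    #W = n * #{w ∈ W | HasNonnegPrefixSums v w} := by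
  have hbij : #((univ : Finset (Fin n)) ×ˢ {w ∈ W | HasNonnegPrefixSums v w}) = #W := by
    refine card_nbij (fun p => rotateWord p.1 p.2) (fun p hp => ?_) (fun p hp q hq hpq => ?_)
      (fun w hw => ?_)
    · simp only [coe_product, Set.mem_prod, coe_filter, Set.mem_ofPred_eq] at hp
      exact hrot _ hp.2.1 _
    · simp only [coe_product, Set.mem_prod, coe_filter, Set.mem_ofPred_eq] at hp hq
      dsimp only at hpq
      -- `p.2` and `q.2` are good rotations of the same word, by `-p.1` and `-q.1`.
      have hr : p.1 = q.1 := neg_injective <|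
        (existsUnique_hasNonnegPrefixSums_rotateWord v (hsum _ (hrot _ hp.2.1 p.1))).unique
          (by rw [rotateWord_neg_rotateWord]; exact hp.2.2)
          (by rw [hpq, rotateWord_neg_rotateWord]; exact hq.2.2)
      refine Prod.ext hr ?_
      rw [← rotateWord_neg_rotateWord p.1 p.2, hpq, hr, rotateWord_neg_rotateWord]
    · obtain ⟨r, hr, -⟩ := existsUnique_hasNonnegPrefixSums_rotateWord v (hsum w hw)
      refine ⟨(-r, rotateWord r w), ?_, rotateWord_neg_rotateWord r w⟩
      simp only [coe_product, Set.mem_prod, coe_filter, Set.mem_ofPred_eq, coe_univ, Set.mem_univ]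
      exact ⟨trivial, hrot w hw r, hr⟩
  rw [← hbij, card_product, card_univ, Fintype.card_fin]

end Rotation

section PairWords

def pairValue (p : Bool × Bool) : ℤ := (if p.1 then 1 else 0) + (if p.2 then 1 else 0) - 1

lemma pairValue_neg_iff {p : Bool × Bool} : pairValue p < 0 ↔ p = (false, false) := by
  obtain ⟨_ | _, _ | _⟩ := p <;> simp [pairValue]

def pairWords (n a b : ℕ) : Finset (Fin n → Bool × Bool) :=
  {w | #{i | (w i).1} = a ∧ #{i | (w i).2} = b}

lemma card_pairWords (n a b : ℕ) : #(pairWords n a b) = n.choose a * n.choose b := by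
  rw [show n.choose a * n.choose b
      = #(powersetCard a (univ : Finset (Fin n)) ×ˢ powersetCard b (univ : Finset (Fin n)))
    by simp [card_product]]
  refine card_nbij'
    (fun w => (({i | (w i).1} : Finset (Fin n)), ({i | (w i).2} : Finset (Fin n))))
    (fun p i => (decide (i ∈ p.1), decide (i ∈ p.2))) ?_ ?_ ?_ ?_
  all_goals intro x hx
  all_goals simp_all [pairWords]

lemma sum_pairValue {n : ℕ} (w : Fin n → Bool × Bool) :
    ∑ i, pairValue (w i) = #{i | (w i).1} + #{i | (w i).2} - n := by
  simp [pairValue, sum_add_distrib, sum_sub_distrib]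

lemma sum_pairValue_of_mem_pairWords {n k : ℕ} (hk : 1 ≤ k) (hkn : k ≤ n)
    {w : Fin n → Bool × Bool} (hw : w ∈ pairWords n (n - k) (k - 1)) :
    ∑ i, pairValue (w i) = -1 := by
  simp only [pairWords, mem_filter, mem_univ, true_and] at hw
  rw [sum_pairValue, hw.1, hw.2]
  omega

lemma rotateWord_mem_pairWords {n a b : ℕ} [NeZero n] {w : Fin n → Bool × Bool}
    (hw : w ∈ pairWords n a b) (r : Fin n) : rotateWord r w ∈ pairWords n a b := by
  have key (p : Bool × Bool → Bool) : #{i | p (rotateWord r w i)} = #{i | p (w i)} :=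
    card_equiv (Equiv.addRight r) (by intro i; simp only [mem_filter, mem_univ, true_and]; rfl)
  simpa [pairWords, key] using hw

end PairWords

section Paths

variable {n : ℕ} {f : ℕ → Bool}

lemma pathHeight_zero (f : ℕ → Bool) : pathHeight f 0 = 0 := by
  simp [pathHeight, upCount]

lemma pathHeight_succ (f : ℕ → Bool) (t : ℕ) :
    pathHeight f (t + 1) = pathHeight f t + if f t then 1 else -1 := by
  simp only [pathHeight, upCount, range_add_one, filter_insert]
  split_ifs with h
  · rw [card_insert_of_notMem (by simp)]; push_cast; ring
  · push_cast; ring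

lemma pathHeight_two_mul_add_one (hf0 : f 0 = true) (m : ℕ) :
    pathHeight f (2 * m + 1)
      = 1 + 2 * ∑ i ∈ range m, pairValue (f (2 * i + 1), f (2 * i + 2)) := by
  induction m with
  | zero => simp [pathHeight_succ, pathHeight_zero, hf0]
  | succ m ih =>
    rw [show 2 * (m + 1) + 1 = 2 * m + 1 + 1 + 1 by ring, pathHeight_succ, pathHeight_succ, ih,
      sum_range_succ]
    cases f (2 * m + 1) <;> cases f (2 * m + 1 + 1) <;> simp [pairValue] <;> ring

def pathToWord (n : ℕ) (f : ℕ → Bool) : Fin n → Bool × Bool :=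
  fun m => (f (2 * m + 1), f (2 * m + 2))

lemma sum_pathToWord :
    ∑ i, pairValue (pathToWord n f i)
      = ∑ i ∈ range n, pairValue (f (2 * i + 1), f (2 * i + 2)) :=
  Fin.sum_univ_eq_sum_range (fun i => pairValue (f (2 * i + 1), f (2 * i + 2))) n

lemma sum_range_pathToWord [NeZero n] {t : ℕ} (ht : t ≤ n) :
    ∑ i ∈ range t, pairValue (pathToWord n f i)
      = ∑ i ∈ range t, pairValue (f (2 * i + 1), f (2 * i + 2)) := by
  refine sum_congr rfl fun i hi => ?_
  rw [pathToWord, Fin.val_cast_of_lt ((mem_range.1 hi).trans_le ht)]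

/-- Heights at even times are squeezed between the odd neighbours, so only odd times matter. -/
lemma forall_pathHeight_nonneg_iff [NeZero n] (hf0 : f 0 = true) :
    (∀ t ≤ 2 * n, 0 ≤ pathHeight f t) ↔ HasNonnegPrefixSums pairValue (pathToWord n f) := by
  simp only [HasNonnegPrefixSums]
  constructor
  · intro h m hm
    have := h (2 * m + 1) (by omega)
    rw [pathHeight_two_mul_add_one hf0, ← sum_range_pathToWord hm.le] at this
    omega
  · intro h t ht
    obtain ⟨m, rfl | rfl⟩ := Nat.even_or_odd' t
    · cases m with
      | zero => simp [pathHeight_zero]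
      | succ m =>
        have := h m (by omega)
        rw [sum_range_pathToWord (by omega)] at this
        rw [show 2 * (m + 1) = 2 * m + 1 + 1 by ring,
          pathHeight_succ, pathHeight_two_mul_add_one hf0]
        split_ifs <;> omega
    · have := h m (by omega)
      rw [sum_range_pathToWord (by omega)] at this
      rw [pathHeight_two_mul_add_one hf0]
      omega

lemma pathHeight_two_mul_eq_zero_iff (hf0 : f 0 = true) (hfn : f (2 * n) = false) :
    pathHeight f (2 * n) = 0 ↔ ∑ i, pairValue (pathToWord n f i) = -1 := by
  have := pathHeight_succ f (2 * n)
  rw [pathHeight_two_mul_add_one hf0, hfn, ← sum_pathToWord] at this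
  constructor <;> intro h <;> simp at this <;> omega

lemma oddUpCount_eq (hf0 : f 0 = true) (hfn : f (2 * n) = false) :
    oddUpCount n f = #{i | (pathToWord n f i).2} + 1 := by
  have hsecond :
      #{i | (pathToWord n f i).2} = ∑ m ∈ range n, if f (2 * m + 2) then 1 else 0 := by
    rw [card_filter]
    exact Fin.sum_univ_eq_sum_range (fun m => if f (2 * m + 2) then 1 else 0) n
  have h := sum_range_succ (fun m => if f (2 * m) then 1 else 0) n
  rw [sum_range_succ'] at h
  simp only [mul_add, mul_one, mul_zero, hf0, hfn, if_true, Bool.false_eq_true, if_false,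
    add_zero] at h
  rw [oddUpCount, card_filter, hsecond, h]

end Paths

section Correspondence

variable {n k : ℕ}

/-- An up-step at index `0`, the letter `w m` at indices `2m + 1, 2m + 2`, and down-steps from
index `2n + 1` on. -/
def wordToPath (w : Fin n → Bool × Bool) : ℕ → Bool
  | 0 => true
  | t + 1 =>
    if h : t / 2 < n then
      if t % 2 = 0 then (w ⟨t / 2, h⟩).1 else (w ⟨t / 2, h⟩).2
    else false

lemma wordToPath_two_mul_add_one (w : Fin n → Bool × Bool) (m : Fin n) :
    wordToPath w (2 * m + 1) = (w m).1 := by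
  have h : (2 * m.val) / 2 = m := by omega
  simp [wordToPath, h]

lemma wordToPath_two_mul_add_two (w : Fin n → Bool × Bool) (m : Fin n) :
    wordToPath w (2 * m + 2) = (w m).2 := by
  have h : (2 * m.val + 1) / 2 = m := by omega
  simp [wordToPath, h, Nat.add_mod]

lemma wordToPath_of_lt (w : Fin n → Bool × Bool) {t : ℕ} (ht : 2 * n < t) :
    wordToPath w t = false := by
  obtain ⟨t, rfl⟩ : ∃ s, t = s + 1 := ⟨t - 1, by omega⟩
  simp [wordToPath, show ¬ t / 2 < n by omega]

lemma pathToWord_wordToPath (w : Fin n → Bool × Bool) : pathToWord n (wordToPath w) = w := by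
  funext m
  simp [pathToWord, wordToPath_two_mul_add_one, wordToPath_two_mul_add_two]

lemma wordToPath_injective : Injective (wordToPath (n := n)) :=
  LeftInverse.injective pathToWord_wordToPath

lemma wordToPath_pathToWord {f : ℕ → Bool} (hf0 : f 0 = true)
    (hfin : ∀ t, 2 * n ≤ t → f t = false) : wordToPath (pathToWord n f) = f := by
  funext t
  cases t with
  | zero => exact hf0.symm
  | succ t =>
    simp only [wordToPath, pathToWord]
    split_ifs with ht hpar
    · congr 1; omega
    · congr 1; omega
    · exact (hfin _ (by omega)).symm

lemma IsDyckPath.apply_zero {f : ℕ → Bool} (hn : 0 < n) (hf : IsDyckPath n f) : f 0 = true := by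
  have h := hf.2.2 1 (by omega)
  rw [pathHeight_succ, pathHeight_zero] at h
  by_contra h0
  simp [h0] at h

lemma pathToWord_mem_of_mem_dyckSet [NeZero n] {f : ℕ → Bool} (hf : f ∈ dyckSet n k) :
    pathToWord n f ∈ pairWords n (n - k) (k - 1) ∧
      HasNonnegPrefixSums pairValue (pathToWord n f) := by
  obtain ⟨⟨hfin, hend, hnonneg⟩, hodd⟩ := hf
  have hf0 := IsDyckPath.apply_zero (Nat.pos_of_neZero n) ⟨hfin, hend, hnonneg⟩
  have hfn := hfin (2 * n) le_rfl
  have hsum := (pathHeight_two_mul_eq_zero_iff hf0 hfn).1 hend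
  rw [oddUpCount_eq hf0 hfn] at hodd
  rw [sum_pairValue] at hsum
  simp only [pairWords, mem_filter, mem_univ, true_and]
  exact ⟨⟨by omega, by omega⟩, (forall_pathHeight_nonneg_iff hf0).1 hnonneg⟩

lemma wordToPath_mem_dyckSet [NeZero n] (hk : 1 ≤ k) (hkn : k ≤ n) {w : Fin n → Bool × Bool}
    (hw : w ∈ pairWords n (n - k) (k - 1)) (hgood : HasNonnegPrefixSums pairValue w) :
    wordToPath w ∈ dyckSet n k := by
  have hsum := sum_pairValue_of_mem_pairWords hk hkn hw
  simp only [pairWords, mem_filter, mem_univ, true_and] at hw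
  -- The total `-1` and the last prefix sum `≥ 0` force the last letter to be two down-steps.
  have hlast : wordToPath w (2 * n) = false := by
    obtain ⟨m, rfl⟩ := Nat.exists_eq_add_one_of_ne_zero (NeZero.ne n)
    have hneg := pairValue_neg_iff.1 (hgood.apply_last_neg pairValue hsum)
    rw [show 2 * (m + 1) = 2 * (Fin.last m : ℕ) + 2 by simp; ring, wordToPath_two_mul_add_two,
      hneg]
  have hfin : ∀ t, 2 * n ≤ t → wordToPath w t = false := fun t ht =>
    ht.eq_or_lt.elim (fun h => h ▸ hlast) (wordToPath_of_lt w)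
  have hf0 : wordToPath w 0 = true := rfl
  refine ⟨⟨hfin, ?_, ?_⟩, ?_⟩
  · rwa [pathHeight_two_mul_eq_zero_iff hf0 hlast, pathToWord_wordToPath]
  · rwa [forall_pathHeight_nonneg_iff hf0, pathToWord_wordToPath]
  · rw [oddUpCount_eq hf0 hlast, pathToWord_wordToPath, hw.2]; omega

theorem dyckSet_eq_image [NeZero n] (hk : 1 ≤ k) (hkn : k ≤ n) :
    dyckSet n k = wordToPath (n := n) ''
      ↑({w ∈ pairWords n (n - k) (k - 1) | HasNonnegPrefixSums pairValue w} : Finset _) := by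
  ext f
  simp only [Set.mem_image, coe_filter, Set.mem_ofPred_eq]
  refine ⟨fun hf => ⟨pathToWord n f, pathToWord_mem_of_mem_dyckSet hf, ?_⟩, ?_⟩
  · exact wordToPath_pathToWord (hf.1.apply_zero (Nat.pos_of_neZero n)) hf.1.1
  · rintro ⟨w, ⟨hw, hgood⟩, rfl⟩
    exact wordToPath_mem_dyckSet hk hkn hw hgood

end Correspondence

/-- The number of Dyck paths of length `2n` with exactly `k` up-steps at odd
instants equals the Narayana number `N(n,k) = (1/n) C(n,k) C(n,k-1)`. -/
theorem dyck_count_eq_narayana (n k : ℕ) (hn : 1 ≤ n) (hk1 : 1 ≤ k) (hkn : k ≤ n) :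
    ((dyckSet n k).ncard : ℚ)
      = (1 / (n : ℚ)) * (n.choose k : ℚ) * (n.choose (k - 1) : ℚ) := by
  have : NeZero n := NeZero.of_pos hn
  have hcount : n * (dyckSet n k).ncard = n.choose k * n.choose (k - 1) := by
    rw [dyckSet_eq_image hk1 hkn, Set.ncard_image_of_injective _ wordToPath_injective,
      Set.ncard_coe_finset, ← card_eq_mul_card_filter_hasNonnegPrefixSums pairValue _
        (fun _ hw => rotateWord_mem_pairWords hw)
        (fun _ hw => sum_pairValue_of_mem_pairWords hk1 hkn hw),
      card_pairWords, Nat.choose_symm hkn]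
  have hn' : (n : ℚ) ≠ 0 := by positivity
  rw [mul_assoc, ← Nat.cast_mul, ← hcount, Nat.cast_mul, one_div, inv_mul_cancel_left₀ hn']
end

section
/- For each integer L ≥ 1 and γ ≥ 1, the L-th moment of the Marchenko–Pastur distribution with ratio γ and variance σ² = 1 equals the sum over k from 1 to L of γ^k times the Narayana number N(L,k). That is, ∫ x^L dρ_MP(x) = Σ_{k=1}^{L} γ^k (1/L) C(L,k) C(L,k-1). -/
/-!
Write `L = n + 1` and `s = √γ`; the factor `1 / x` of the density cancels one power of `x`.
The substitution `x = 1 + γ + 2 s t` maps `[-1, 1]` onto the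
support and turns the Marchenko–Pastur weight into `2 s √(1 - t²)`, so the moment becomes a
semicircle average of `(1 + γ + 2 s t) ^ n`. Expanding binomially, only even powers of `t`
survive, and `∫ t ^ (2m) √(1 - t²) = π Cat(m) / (2 · 4 ^ m)` by Wallis' recursion, giving
`γ · Σ_m C(n, 2m) Cat(m) γ ^ m (1 + γ) ^ (n - 2m)`. The coefficient of `γ ^ (p + 1)` in this
is `Σ_m C(n, 2m) Cat(m) C(n - 2m, p - m)`; the trinomial identity
`C(n, 2m) C(2m, m) C(n - 2m, p - m) = C(n, p) C(p, m) C(n - p, m)` and Vandermonde's convolution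
reduce it to the Narayana number `N(n + 1, p + 1)`.
-/

open Real Finset intervalIntegral

theorem Finset.sum_range_two_mul {M : Type*} [AddCommMonoid M] (f : ℕ → M) (N : ℕ) :
    ∑ j ∈ range (2 * N), f j = ∑ m ∈ range N, (f (2 * m) + f (2 * m + 1)) := by
  induction N with
  | zero => simp
  | succ N ih => rw [mul_add_one, sum_range_succ, sum_range_succ, sum_range_succ, ih, add_assoc]

theorem one_add_pow_eq_sum_range {R : Type*} [CommSemiring R] (x : R) {N K : ℕ} (hNK : N < K) :
    (1 + x) ^ N = ∑ i ∈ range K, (N.choose i : R) * x ^ i := by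
  rw [add_comm, add_pow]
  refine (sum_congr rfl fun i _ => by rw [one_pow, mul_one, mul_comm]).trans
    (sum_subset (range_subset_range.mpr hNK) fun i _ hi => ?_)
  rw [Nat.choose_eq_zero_of_lt (by simpa using hi), Nat.cast_zero, zero_mul]

theorem integral_neg_pi_div_two_pi_div_two_sin_pow_add_two (n : ℕ) :
    ∫ θ in -(π / 2)..π / 2, sin θ ^ (n + 2)
      = (n + 1) / (n + 2) * ∫ θ in -(π / 2)..π / 2, sin θ ^ n := by
  simp [integral_sin_pow]

theorem integral_neg_pi_div_two_pi_div_two_sin_pow_two_mul (m : ℕ) :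
    ∫ θ in -(π / 2)..π / 2, sin θ ^ (2 * m) = π * (2 * m).choose m / 4 ^ m := by
  induction m with
  | zero => simp
  | succ m ih =>
    have hrec : ((m + 1 : ℕ) : ℝ) * (2 * (m + 1)).choose (m + 1)
        = 2 * (2 * m + 1) * (2 * m).choose m := by
      rw [← Nat.centralBinom_eq_two_mul_choose, ← Nat.centralBinom_eq_two_mul_choose]
      exact_mod_cast Nat.succ_mul_centralBinom_succ m
    rw [mul_add_one, integral_neg_pi_div_two_pi_div_two_sin_pow_add_two, ih]
    field_simp
    push_cast at hrec ⊢
    linear_combination (-2 * 4 ^ m) * hrec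

theorem integral_neg_pi_div_two_pi_div_two_sin_pow_two_mul_add_one (m : ℕ) :
    ∫ θ in -(π / 2)..π / 2, sin θ ^ (2 * m + 1) = 0 := by
  induction m with
  | zero => simp
  | succ m ih =>
    rw [show 2 * (m + 1) + 1 = 2 * m + 1 + 2 by ring,
      integral_neg_pi_div_two_pi_div_two_sin_pow_add_two, ih, mul_zero]

theorem integral_pow_mul_sqrt_one_sub_sq (j : ℕ) :
    ∫ t in (-1 : ℝ)..1, t ^ j * √(1 - t ^ 2)
      = (∫ θ in -(π / 2)..π / 2, sin θ ^ j) / (j + 2) := by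
  have hsubst : ∫ t in (-1 : ℝ)..1, t ^ j * √(1 - t ^ 2)
      = ∫ θ in -(π / 2)..π / 2, sin θ ^ j * cos θ ^ 2 := by
    have h := integral_comp_mul_deriv (a := -(π / 2)) (b := π / 2)
      (fun x _ => hasDerivAt_sin x) continuous_cos.continuousOn
      (g := fun t => t ^ j * √(1 - t ^ 2)) (by fun_prop)
    rw [sin_neg, sin_pi_div_two] at h
    rw [← h]
    refine integral_congr fun θ hθ => ?_
    rw [Set.uIcc_of_le (by linarith [pi_pos])] at hθ
    simp only [Function.comp, ← cos_sq', sqrt_sq (cos_nonneg_of_mem_Icc hθ)]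
    ring
  have hint : ∀ k : ℕ,
      IntervalIntegrable (fun θ => sin θ ^ k) MeasureTheory.volume (-(π / 2)) (π / 2) :=
    fun k => (continuous_sin.pow k).intervalIntegrable _ _
  rw [hsubst]
  simp_rw [cos_sq', mul_sub, mul_one, ← pow_add]
  rw [integral_sub (hint j) (hint (j + 2)), integral_neg_pi_div_two_pi_div_two_sin_pow_add_two]
  field_simp
  ring

theorem integral_pow_two_mul_mul_sqrt_one_sub_sq (m : ℕ) :
    ∫ t in (-1 : ℝ)..1, t ^ (2 * m) * √(1 - t ^ 2) = π * catalan m / (2 * 4 ^ m) := by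
  have hcat : ((m : ℝ) + 1) * catalan m = (2 * m).choose m := by
    rw [← Nat.centralBinom_eq_two_mul_choose, ← succ_mul_catalan_eq_centralBinom]
    push_cast
    ring
  rw [integral_pow_mul_sqrt_one_sub_sq, integral_neg_pi_div_two_pi_div_two_sin_pow_two_mul,
    ← hcat]
  field_simp
  push_cast
  ring

theorem integral_pow_two_mul_add_one_mul_sqrt_one_sub_sq (m : ℕ) :
    ∫ t in (-1 : ℝ)..1, t ^ (2 * m + 1) * √(1 - t ^ 2) = 0 := by
  rw [integral_pow_mul_sqrt_one_sub_sq,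
    integral_neg_pi_div_two_pi_div_two_sin_pow_two_mul_add_one, zero_div]

theorem integral_add_mul_pow_mul_sqrt_one_sub_sq (a b : ℝ) (n : ℕ) :
    ∫ t in (-1 : ℝ)..1, (a + b * t) ^ n * √(1 - t ^ 2)
      = π / 2 * ∑ m ∈ range (n + 1),
          n.choose (2 * m) * catalan m * (b ^ 2 / 4) ^ m * a ^ (n - 2 * m) := by
  set c : ℕ → ℝ := fun j => b ^ j * a ^ (n - j) * n.choose j with hc
  have hexpand : ∀ t : ℝ, (a + b * t) ^ n * √(1 - t ^ 2)
      = ∑ j ∈ range (n + 1), c j * (t ^ j * √(1 - t ^ 2)) := fun t => by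
    rw [add_comm, add_pow, sum_mul]
    refine sum_congr rfl fun j _ => ?_
    rw [hc, mul_pow]
    ring
  have hvanish : ∀ j, n < j → c j = 0 := fun j hj => by
    simp only [hc, Nat.choose_eq_zero_of_lt hj, Nat.cast_zero, mul_zero]
  simp_rw [hexpand]
  rw [integral_finsetSum fun j _ => by apply Continuous.intervalIntegrable; fun_prop]
  simp_rw [integral_const_mul]
  rw [sum_subset (range_subset_range.mpr (by omega : n + 1 ≤ 2 * (n + 1)))
      fun j _ hj => by rw [hvanish j (by simpa using hj), zero_mul],
    sum_range_two_mul, mul_sum]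
  refine sum_congr rfl fun m _ => ?_
  rw [integral_pow_two_mul_mul_sqrt_one_sub_sq, integral_pow_two_mul_add_one_mul_sqrt_one_sub_sq,
    hc, div_pow, ← pow_mul]
  field_simp
  ring

theorem integral_pow_mul_sqrt_marchenkoPastur {s : ℝ} (hs : 0 ≤ s) (n : ℕ) :
    ∫ x in (1 - s) ^ 2..(1 + s) ^ 2, x ^ n * √(((1 + s) ^ 2 - x) * (x - (1 - s) ^ 2))
      = 2 * π * ∑ m ∈ range (n + 1),
          n.choose (2 * m) * catalan m * (s ^ 2) ^ (m + 1) * (1 + s ^ 2) ^ (n - 2 * m) := by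
  have hsubst := smul_integral_comp_mul_add (a := -1) (b := 1)
    (fun x => x ^ n * √(((1 + s) ^ 2 - x) * (x - (1 - s) ^ 2))) (2 * s) (1 + s ^ 2)
  rw [show 2 * s * -1 + (1 + s ^ 2) = (1 - s) ^ 2 by ring,
    show 2 * s * 1 + (1 + s ^ 2) = (1 + s) ^ 2 by ring] at hsubst
  have hweight : ∀ t : ℝ,
      √(((1 + s) ^ 2 - (2 * s * t + (1 + s ^ 2))) * (2 * s * t + (1 + s ^ 2) - (1 - s) ^ 2))
        = 2 * s * √(1 - t ^ 2) := fun t => by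
    rw [show ((1 + s) ^ 2 - (2 * s * t + (1 + s ^ 2))) * (2 * s * t + (1 + s ^ 2) - (1 - s) ^ 2)
      = (2 * s) ^ 2 * (1 - t ^ 2) by ring, sqrt_mul (by positivity), sqrt_sq (by positivity)]
  simp only [hweight, smul_eq_mul] at hsubst
  rw [← hsubst]
  simp_rw [add_comm (2 * s * _), mul_left_comm _ (2 * s)]
  rw [integral_const_mul, integral_add_mul_pow_mul_sqrt_one_sub_sq]
  simp only [mul_sum]
  refine sum_congr rfl fun m _ => ?_
  rw [div_pow, mul_pow, ← pow_mul]
  field_simp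
  ring

theorem Nat.choose_mul_choose_sub_comm (n a b : ℕ) :
    n.choose a * (n - a).choose b = n.choose b * (n - b).choose a := by
  have ha := Nat.choose_mul (n := n) (k := a + b) (Nat.le_add_right a b)
  have hb := Nat.choose_mul (n := n) (k := a + b) (Nat.le_add_left b a)
  rw [Nat.add_sub_cancel_left] at ha
  rw [Nat.add_sub_cancel] at hb
  rw [← ha, ← hb, Nat.choose_symm_add]

theorem Nat.choose_two_mul_mul_choose_mul_choose {n m p : ℕ} (hmp : m ≤ p) :
    n.choose (2 * m) * (2 * m).choose m * (n - 2 * m).choose (p - m)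
      = n.choose p * p.choose m * (n - p).choose m := by
  have h2m := Nat.choose_mul (n := n) (k := 2 * m) (s := m) (by omega)
  have hp := Nat.choose_mul (n := n) (k := p) (s := m) hmp
  have hcomm := Nat.choose_mul_choose_sub_comm (n - m) m (p - m)
  rw [show 2 * m - m = m by omega] at h2m
  rw [show n - m - m = n - 2 * m by omega, show n - m - (p - m) = n - p by omega] at hcomm
  rw [h2m, hp, mul_assoc, hcomm, mul_assoc]

theorem Nat.sum_range_choose_mul_choose_succ (p q : ℕ) :
    ∑ m ∈ range (p + 1), p.choose m * q.choose (m + 1) = (p + q).choose (p + 1) := by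
  rw [Nat.add_choose_eq,
    Nat.sum_antidiagonal_eq_sum_range_succ (fun i j => p.choose i * q.choose j),
    sum_range_succ _ (p + 1), Nat.choose_succ_self, zero_mul, add_zero, ← sum_range_reflect]
  refine sum_congr rfl fun m hm => ?_
  rw [mem_range] at hm
  rw [show p + 1 - 1 - m = p - m by omega, Nat.choose_symm (by omega),
    show p - m + 1 = p + 1 - m by omega]

theorem Nat.succ_sub_mul_choose_two_mul_mul_catalan_mul_choose {n m p : ℕ} (hmp : m ≤ p) :
    (n - p + 1) * (n.choose (2 * m) * catalan m * (n - 2 * m).choose (p - m))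
      = n.choose p * (p.choose m * (n - p + 1).choose (m + 1)) := by
  apply Nat.eq_of_mul_eq_mul_left m.succ_pos
  have hcat : (m + 1) * catalan m = (2 * m).choose m := by
    rw [succ_mul_catalan_eq_centralBinom, Nat.centralBinom_eq_two_mul_choose]
  calc (m + 1) * ((n - p + 1) * (n.choose (2 * m) * catalan m * (n - 2 * m).choose (p - m)))
      = (n - p + 1) * (n.choose (2 * m) * ((m + 1) * catalan m) * (n - 2 * m).choose (p - m)) := by
        ring
    _ = n.choose p * p.choose m * ((n - p + 1) * (n - p).choose m) := by
        rw [hcat, Nat.choose_two_mul_mul_choose_mul_choose hmp]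
        ring
    _ = (m + 1) * (n.choose p * (p.choose m * (n - p + 1).choose (m + 1))) := by
        rw [Nat.add_one_mul_choose_eq]
        ring

theorem Nat.succ_mul_sum_choose_two_mul_mul_catalan_mul_choose {n p : ℕ} (hpn : p ≤ n) :
    (n + 1) * ∑ m ∈ range (p + 1), n.choose (2 * m) * catalan m * (n - 2 * m).choose (p - m)
      = (n + 1).choose p * (n + 1).choose (p + 1) := by
  apply Nat.eq_of_mul_eq_mul_left (show 0 < n + 1 - p by omega)
  have hsum : (n - p + 1) * ∑ m ∈ range (p + 1),
      n.choose (2 * m) * catalan m * (n - 2 * m).choose (p - m)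
        = n.choose p * (n + 1).choose (p + 1) := by
    rw [mul_sum, sum_congr rfl fun m hm =>
      Nat.succ_sub_mul_choose_two_mul_mul_catalan_mul_choose
        (Nat.lt_succ_iff.mp (mem_range.mp hm)),
      ← mul_sum, Nat.sum_range_choose_mul_choose_succ, show p + (n - p + 1) = n + 1 by omega]
  calc (n + 1 - p) * ((n + 1) * ∑ m ∈ range (p + 1),
        n.choose (2 * m) * catalan m * (n - 2 * m).choose (p - m))
      = (n + 1) * ((n - p + 1) * ∑ m ∈ range (p + 1),
        n.choose (2 * m) * catalan m * (n - 2 * m).choose (p - m)) := by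
        rw [show n + 1 - p = n - p + 1 by omega]
        ring
    _ = (n + 1 - p) * ((n + 1).choose p * (n + 1).choose (p + 1)) := by
        rw [hsum, ← mul_assoc, mul_comm (n + 1), Nat.choose_mul_succ_eq]
        ring

theorem sum_choose_two_mul_mul_catalan_mul_pow_mul_one_add_pow {R : Type*} [CommSemiring R]
    (x : R) (n : ℕ) :
    ∑ m ∈ range (n + 1), (n.choose (2 * m) * catalan m : R) * x ^ m * (1 + x) ^ (n - 2 * m)
      = ∑ p ∈ range (n + 1),
          ((∑ m ∈ range (p + 1),
              n.choose (2 * m) * catalan m * (n - 2 * m).choose (p - m) : ℕ) : R) * x ^ p := by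
  have hexpand : ∀ m ∈ range (n + 1),
      (n.choose (2 * m) * catalan m : R) * x ^ m * (1 + x) ^ (n - 2 * m)
        = ∑ i ∈ range (n + 1 - m),
            (n.choose (2 * m) * catalan m * (n - 2 * m).choose i : ℕ) * x ^ (m + i) := by
    intro m hm
    rw [one_add_pow_eq_sum_range x (K := n + 1 - m) (by simp at hm; omega), mul_sum]
    refine sum_congr rfl fun i _ => ?_
    push_cast
    ring
  rw [sum_congr rfl hexpand, ← sum_range_diag_flip]
  refine sum_congr rfl fun p _ => ?_
  rw [Nat.cast_sum, sum_mul]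
  refine sum_congr rfl fun m hm => ?_
  rw [Nat.add_sub_cancel' (by simpa [Nat.lt_succ_iff] using hm)]

theorem sum_choose_two_mul_mul_catalan_mul_pow_succ_eq_sum_narayana {K : Type*} [Field K]
    [CharZero K] (x : K) (n : ℕ) :
    ∑ m ∈ range (n + 1),
        (n.choose (2 * m) * catalan m : K) * x ^ (m + 1) * (1 + x) ^ (n - 2 * m)
      = ∑ k ∈ Icc 1 (n + 1), x ^ k *
          ((1 / ((n + 1 : ℕ) : K)) * ((n + 1).choose k : K) * ((n + 1).choose (k - 1) : K)) := by
  have hIcc : Icc 1 (n + 1) = (range (n + 1)).map (addRightEmbedding 1) := by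
    rw [range_eq_Ico, map_add_right_Ico, zero_add, Ico_add_one_right_eq_Icc]
  rw [hIcc, sum_map]
  calc _ = x * ∑ m ∈ range (n + 1),
        (n.choose (2 * m) * catalan m : K) * x ^ m * (1 + x) ^ (n - 2 * m) := by
        rw [mul_sum]
        exact sum_congr rfl fun m _ => by ring
    _ = _ := by
        rw [sum_choose_two_mul_mul_catalan_mul_pow_mul_one_add_pow, mul_sum]
        refine sum_congr rfl fun p hp => ?_
        have hnarayana : ((n + 1 : ℕ) : K) * ((∑ m ∈ range (p + 1),
            n.choose (2 * m) * catalan m * (n - 2 * m).choose (p - m) : ℕ) : K)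
              = (n + 1).choose p * (n + 1).choose (p + 1) := by
          exact_mod_cast Nat.succ_mul_sum_choose_two_mul_mul_catalan_mul_choose
            (Nat.lt_succ_iff.mp (mem_range.mp hp))
        rw [addRightEmbedding_apply, Nat.add_sub_cancel, pow_succ]
        field_simp
        linear_combination x * x ^ p * hnarayana

/-- For `L ≥ 1` and `γ ≥ 1`, the `L`-th moment of the Marchenko–Pastur
distribution with ratio `γ` and `σ² = 1` equals
`Σ_{k=1}^L γ^k N(L,k)` where `N(L,k)` are the Narayana numbers. -/
theorem mp_moment_eq_narayana_sum (γ : ℝ) (hγ : 1 ≤ γ) (L : ℕ) (hL : 1 ≤ L) :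
    (∫ x in ((1 - Real.sqrt γ) ^ 2)..((1 + Real.sqrt γ) ^ 2),
        x ^ L *
          (Real.sqrt (((1 + Real.sqrt γ) ^ 2 - x) * (x - (1 - Real.sqrt γ) ^ 2)) /
            (2 * Real.pi * x)))
      = ∑ k ∈ Finset.Icc 1 L,
          γ ^ k * ((1 / (L : ℝ)) * (L.choose k : ℝ) * (L.choose (k - 1) : ℝ)) := by
  obtain ⟨n, rfl⟩ : ∃ n, L = n + 1 := ⟨L - 1, by omega⟩
  have hdensity : ∀ x : ℝ,
      x ^ (n + 1) * (√(((1 + √γ) ^ 2 - x) * (x - (1 - √γ) ^ 2)) / (2 * π * x))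
        = (2 * π)⁻¹ * (x ^ n * √(((1 + √γ) ^ 2 - x) * (x - (1 - √γ) ^ 2))) := by
    intro x
    rcases eq_or_ne x 0 with rfl | hx
    · -- the left side is `0` by `y / 0 = 0`; the right side too, as the radicand is `≤ 0`
      rw [sqrt_eq_zero'.mpr (by nlinarith [sq_nonneg (1 + √γ), sq_nonneg (1 - √γ)])]
      simp
    · field_simp
      ring
  simp_rw [hdensity]
  rw [integral_const_mul, integral_pow_mul_sqrt_marchenkoPastur (sqrt_nonneg γ),
    sq_sqrt (by linarith), inv_mul_cancel_left₀ (by positivity),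
    ← sum_choose_two_mul_mul_catalan_mul_pow_succ_eq_sum_narayana]
end

section
/- The Narayana number satisfies the decomposition N(s,k) = Σ_{l=0}^{min(k, s-k)} Σ_{Q=0}^{l} D(l,Q) · C(l - Q + s - k - 1, s - k - l) · C(s, k - l), where D(l,Q) is the number of Dyck paths of length 2l with exactly Q returns to level 0. -/
/-- The set of Dyck paths of length `2*l` with exactly `Q` returns to level 0
(times `t > 0` with `x(t) = 0`). -/
def dyckReturnSet (l Q : ℕ) : Set (ℕ → Bool) :=
  {f | IsDyckPath l f ∧
    ((Finset.Icc 1 (2 * l)).filter (fun t => pathHeight f t = 0)).card = Q}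

namespace NarayanaDecomposition

open Finset

def pathCons (b : Bool) (f : ℕ → Bool) : ℕ → Bool
  | 0 => b
  | t + 1 => f t

lemma pathCons_injective (b : Bool) : Function.Injective (pathCons b) :=
  fun _ _ h => funext fun t => congrFun h (t + 1)

lemma range_pathCons_true_union_false :
    Set.range (pathCons true) ∪ Set.range (pathCons false) = Set.univ := by
  refine Set.eq_univ_of_forall fun g => ?_
  have hg : pathCons (g 0) (fun t => g (t + 1)) = g := funext fun t => by cases t <;> rfl
  cases h0 : g 0 <;> rw [h0] at hg
  exacts [Or.inr ⟨_, hg⟩, Or.inl ⟨_, hg⟩]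

lemma ncard_eq_ncard_preimage_pathCons_add {S : Set (ℕ → Bool)} (hS : S.Finite) :
    S.ncard = (pathCons true ⁻¹' S).ncard + (pathCons false ⁻¹' S).ncard := by
  have hdisj : Disjoint (S ∩ Set.range (pathCons true)) (S ∩ Set.range (pathCons false)) := by
    refine Set.disjoint_left.2 fun g ⟨_, f, hf⟩ ⟨_, f', hf'⟩ => ?_
    simpa [← hf, pathCons] using congrFun hf' 0
  rw [← Set.ncard_image_of_injective (pathCons true ⁻¹' S) (pathCons_injective true),
    ← Set.ncard_image_of_injective (pathCons false ⁻¹' S) (pathCons_injective false),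
    Set.image_preimage_eq_inter_range, Set.image_preimage_eq_inter_range,
    ← Set.ncard_union_eq hdisj (hS.subset Set.inter_subset_left)
      (hS.subset Set.inter_subset_left),
    ← Set.inter_union_distrib_left, range_pathCons_true_union_false, Set.inter_univ]

lemma upCount_pathCons (b : Bool) (f : ℕ → Bool) (t : ℕ) :
    upCount (pathCons b f) (t + 1) = b.toNat + upCount f t := by
  rw [upCount, upCount, card_filter, card_filter, sum_range_succ', add_comm]
  cases b <;> rfl

def level (h : ℤ) (f : ℕ → Bool) (t : ℕ) : ℤ := h + pathHeight f t

@[simp] lemma level_zero (h : ℤ) (f : ℕ → Bool) : level h f 0 = h := by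
  simp [level, pathHeight, upCount]

lemma level_pathCons_succ (b : Bool) (h : ℤ) (f : ℕ → Bool) (t : ℕ) :
    level h (pathCons b f) (t + 1) = level (h + (2 * b.toNat - 1)) f t := by
  simp only [level, pathHeight, upCount_pathCons]
  push_cast
  ring

def zeroCount (h : ℤ) (f : ℕ → Bool) (n : ℕ) : ℕ :=
  #{t ∈ range (n + 1) | level h f t = 0}

lemma zeroCount_pathCons (b : Bool) (h : ℤ) (f : ℕ → Bool) (n : ℕ) :
    zeroCount h (pathCons b f) (n + 1) =
      zeroCount (h + (2 * b.toNat - 1)) f n + if h = 0 then 1 else 0 := by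
  simp only [zeroCount, card_filter]
  rw [sum_range_succ' _ (n + 1)]
  simp only [level_pathCons_succ, level_zero]

/-- `Z` counts the visits to level `0` at times `0, …, n`, so a Dyck path with `Q` returns has
`Z = Q + 1`. -/
def nonnegPaths (n : ℕ) (h : ℤ) (Z : ℕ) : Set (ℕ → Bool) :=
  {f | (∀ t, n ≤ t → f t = false) ∧ level h f n = 0 ∧ (∀ t ≤ n, 0 ≤ level h f t) ∧
    zeroCount h f n = Z}

lemma finite_setOf_forall_le_eq_false (n : ℕ) :
    {f : ℕ → Bool | ∀ t, n ≤ t → f t = false}.Finite := by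
  let extend (g : Fin n → Bool) (t : ℕ) : Bool := if ht : t < n then g ⟨t, ht⟩ else false
  refine (Set.finite_range extend).subset fun f hf => ⟨fun i => f i, funext fun t => ?_⟩
  by_cases ht : t < n
  · simp [extend, ht]
  · simp [extend, ht, hf t (not_lt.1 ht)]

lemma nonnegPaths_finite (n : ℕ) (h : ℤ) (Z : ℕ) : (nonnegPaths n h Z).Finite :=
  (finite_setOf_forall_le_eq_false n).subset fun _ hf => hf.1

lemma pathCons_mem_nonnegPaths_iff (b : Bool) (f : ℕ → Bool) (n : ℕ) (h : ℤ) (Z : ℕ)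
    (hh : 0 ≤ h) :
    pathCons b f ∈ nonnegPaths (n + 1) h (Z + if h = 0 then 1 else 0) ↔
      f ∈ nonnegPaths n (h + (2 * b.toNat - 1)) Z := by
  simp only [nonnegPaths, Set.mem_ofPred_eq, zeroCount_pathCons, level_pathCons_succ,
    Nat.add_right_cancel_iff]
  refine and_congr ⟨fun H t ht => H (t + 1) (by omega), fun H t ht => ?_⟩
    (and_congr Iff.rfl (and_congr ⟨fun H t ht => ?_, fun H t ht => ?_⟩ Iff.rfl))
  · obtain ⟨t, rfl⟩ := Nat.exists_eq_add_of_le' (n.succ_pos.trans_le ht)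
    exact H t (by omega)
  · simpa [level_pathCons_succ] using H (t + 1) (by omega)
  · cases t with
    | zero => simpa using hh
    | succ t => simpa [level_pathCons_succ] using H t (by omega)

lemma nonnegPaths_of_neg {h : ℤ} (hh : h < 0) (n Z : ℕ) : nonnegPaths n h Z = ∅ :=
  Set.eq_empty_of_forall_notMem fun f hf => by
    have := hf.2.2.1 0 n.zero_le
    rw [level_zero] at this
    omega

lemma nonnegPaths_zero_right (n : ℕ) (h : ℤ) : nonnegPaths n h 0 = ∅ :=
  Set.eq_empty_of_forall_notMem fun f hf => by
    have : n ∈ {t ∈ range (n + 1) | level h f t = 0} := by simp [hf.2.1]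
    have := card_pos.2 ⟨n, this⟩
    rw [← zeroCount, hf.2.2.2] at this
    exact Nat.lt_irrefl 0 this

lemma ncard_nonnegPaths_succ (n : ℕ) {h : ℤ} (hh : 0 ≤ h) (Z : ℕ) :
    (nonnegPaths (n + 1) h (Z + if h = 0 then 1 else 0)).ncard =
      (nonnegPaths n (h + 1) Z).ncard + (nonnegPaths n (h - 1) Z).ncard := by
  have hpre : ∀ b, pathCons b ⁻¹' nonnegPaths (n + 1) h (Z + if h = 0 then 1 else 0) =
      nonnegPaths n (h + (2 * b.toNat - 1)) Z :=
    fun b => Set.ext fun f => pathCons_mem_nonnegPaths_iff b f n h Z hh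
  rw [ncard_eq_ncard_preimage_pathCons_add (nonnegPaths_finite _ _ _), hpre, hpre]
  norm_num [sub_eq_add_neg]

lemma ncard_nonnegPaths_zero_left (h : ℤ) (Z : ℕ) :
    (nonnegPaths 0 h Z).ncard = if h = 0 ∧ Z = 1 then 1 else 0 := by
  have hzero : ∀ f, zeroCount h f 0 = if h = 0 then 1 else 0 := fun f => by
    simp only [zeroCount, zero_add, range_one, filter_singleton, level_zero]
    split_ifs <;> rfl
  split_ifs with hhZ
  · obtain ⟨rfl, rfl⟩ := hhZ
    refine Set.ncard_eq_one.2 ⟨fun _ => false, Set.eq_singleton_iff_unique_mem.2 ⟨?_, ?_⟩⟩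
    · refine ⟨fun _ _ => rfl, level_zero _ _, fun t ht => ?_, by simp [hzero]⟩
      rw [Nat.le_zero.1 ht, level_zero]
    · exact fun f hf => funext fun t => hf.1 t t.zero_le
  · refine (Set.ncard_eq_zero (nonnegPaths_finite 0 h Z)).2
      (Set.eq_empty_of_forall_notMem fun f hf => hhZ ?_)
    have h0 : h = 0 := by simpa using hf.2.1
    exact ⟨h0, by rw [← hf.2.2.2, hzero, if_pos h0]⟩

/-- The number of paths of length `j` from level `x` that reach level `0` for the first time at
time `j`. -/
def firstPassage : ℕ → ℕ → ℕ
  | 0, x => if x = 0 then 1 else 0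
  | _ + 1, 0 => 0
  | j + 1, x + 1 => firstPassage j x + firstPassage j (x + 2)

lemma firstPassage_of_lt {j x : ℕ} (h : j < x) : firstPassage j x = 0 := by
  induction j generalizing x with
  | zero => simp [firstPassage, Nat.ne_zero_of_lt h]
  | succ j ih =>
    obtain ⟨x, rfl⟩ := Nat.exists_eq_add_of_lt h
    rw [show j + 1 + x + 1 = (j + x + 1) + 1 by omega, firstPassage, ih (by omega), ih (by omega)]

lemma firstPassage_self (x : ℕ) : firstPassage x x = 1 := by
  induction x with
  | zero => rfl
  | succ x ih => rw [firstPassage, ih, firstPassage_of_lt (by omega)]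

theorem firstPassage_ballot (x a : ℕ) :
    (x + 2 * a) * firstPassage (x + 2 * a) x = x * (x + 2 * a).choose a := by
  induction hn : x + 2 * a generalizing x a with
  | zero =>
    obtain ⟨rfl, rfl⟩ : x = 0 ∧ a = 0 := by omega
    rfl
  | succ n ih =>
    rcases x with _ | x
    · simp [firstPassage]
    rcases a with _ | a
    · simp [← hn, firstPassage_self]
    have h₁ := ih x (a + 1) (by omega)
    have h₂ := ih (x + 2) a (by omega)
    have hpascal := Nat.choose_succ_succ' n a
    have habsorb := Nat.choose_succ_right_eq n a
    rw [show n - a = x + a + 2 by omega] at habsorb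
    rw [firstPassage, hpascal]
    obtain rfl : n = x + 2 * a + 2 := by omega
    refine Nat.eq_of_mul_eq_mul_left (by omega : 0 < x + 2 * a + 2) ?_
    zify at h₁ h₂ habsorb ⊢
    linear_combination ((x : ℤ) + 2 * a + 3) * (h₁ + h₂) - 2 * habsorb

theorem ncard_nonnegPaths (n h Z : ℕ) :
    (nonnegPaths n h (Z + 1)).ncard = firstPassage (n - Z) (h + Z) := by
  induction n generalizing h Z with
  | zero => simp [ncard_nonnegPaths_zero_left, firstPassage]
  | succ n ih =>
    rcases h with _ | g
    · have hstep := ncard_nonnegPaths_succ n (le_refl (0 : ℤ)) Z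
      norm_num [nonnegPaths_of_neg] at hstep
      rw [Nat.cast_zero, hstep]
      rcases Z with _ | Z
      · simp [nonnegPaths_zero_right, firstPassage]
      · simpa [add_comm] using ih 1 Z
    · have hstep := ncard_nonnegPaths_succ n (h := g + 1) (by positivity) (Z + 1)
      rw [if_neg (by positivity), add_zero] at hstep
      push_cast at hstep ⊢
      rw [hstep, show (g : ℤ) + 1 + 1 = (g + 2 : ℕ) by push_cast; ring, add_sub_cancel_right,
        ih, ih]
      rcases le_or_gt Z n with hZ | hZ
      · rw [show n + 1 - Z = n - Z + 1 by omega, show g + 1 + Z = g + Z + 1 by omega, firstPassage,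
          add_comm, show g + Z + 2 = g + 2 + Z by omega]
      · simp [show n + 1 - Z = 0 by omega, show n - Z = 0 by omega, firstPassage]
        omega

lemma zeroCount_zero_left (f : ℕ → Bool) (n : ℕ) :
    zeroCount 0 f n = #{t ∈ Icc 1 n | pathHeight f t = 0} + 1 := by
  have hrange : range (n + 1) = insert 0 (Icc 1 n) := by ext t; simp; omega
  have hlevel : level 0 f = pathHeight f := funext fun t => zero_add _
  rw [zeroCount, hrange, hlevel, filter_insert, if_pos (by simp [pathHeight, upCount]),
    card_insert_of_notMem (by simp)]

lemma dyckReturnSet_eq_nonnegPaths (l Q : ℕ) :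
    dyckReturnSet l Q = nonnegPaths (2 * l) 0 (Q + 1) := by
  ext f
  simp [dyckReturnSet, IsDyckPath, nonnegPaths, zeroCount_zero_left, level, and_assoc]

theorem ncard_dyckReturnSet (l Q : ℕ) :
    (dyckReturnSet l Q).ncard = firstPassage (2 * l - Q) Q := by
  simpa [dyckReturnSet_eq_nonnegPaths] using ncard_nonnegPaths (2 * l) 0 Q

theorem mul_ncard_dyckReturnSet {l Q : ℕ} (hl : 1 ≤ l) (hQ : Q ≤ l) :
    l * (dyckReturnSet l Q).ncard = Q * (2 * l - Q - 1).choose (l - 1) := by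
  have hballot := firstPassage_ballot Q (l - Q)
  rw [show Q + 2 * (l - Q) = 2 * l - Q by omega] at hballot
  have habsorb := Nat.add_one_mul_choose_eq (2 * l - Q - 1) (l - 1)
  rw [show 2 * l - Q - 1 + 1 = 2 * l - Q by omega, show l - 1 + 1 = l by omega,
    Nat.choose_symm_of_eq_add (show 2 * l - Q = l + (l - Q) by omega)] at habsorb
  rw [ncard_dyckReturnSet]
  refine Nat.eq_of_mul_eq_mul_left (by omega : 0 < 2 * l - Q) ?_
  calc (2 * l - Q) * (l * firstPassage (2 * l - Q) Q)
      = l * (Q * (2 * l - Q).choose (l - Q)) := by rw [← hballot]; ring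
    _ = Q * ((2 * l - Q).choose (l - Q) * l) := by ring
    _ = (2 * l - Q) * (Q * (2 * l - Q - 1).choose (l - 1)) := by rw [← habsorb]; ring

noncomputable def innerSum (l m : ℕ) : ℚ :=
  ∑ Q ∈ range (l + 1), ((dyckReturnSet l Q).ncard : ℚ) * (l - Q + m - 1).choose (m - l)

def innerTerm (l m Q : ℕ) : ℚ :=
  ((2 * l - Q - 1).choose (l - 1) * (l - Q + m - 1).choose (m - l) : ℕ)

lemma innerTerm_succ {l m Q : ℕ} (hQ : Q < l) (hlm : l ≤ m) :
    ((l : ℚ) + m - Q - 1) * innerTerm l m (Q + 1) = ((l : ℚ) - Q) * innerTerm l m Q := by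
  obtain ⟨p, rfl⟩ := Nat.exists_eq_add_of_lt hQ
  obtain ⟨r, rfl⟩ := Nat.exists_eq_add_of_le hlm
  have hA := Nat.choose_mul_succ_eq (Q + 2 * p) (Q + p)
  have hB := Nat.choose_mul_succ_eq (Q + 2 * p + r) r
  simp only [innerTerm]
  rw [show 2 * (Q + p + 1) - (Q + 1) - 1 = Q + 2 * p by omega,
    show Q + p + 1 - (Q + 1) + (Q + p + 1 + r) - 1 = Q + 2 * p + r by omega,
    show 2 * (Q + p + 1) - Q - 1 = Q + 2 * p + 1 by omega,
    show Q + p + 1 - Q + (Q + p + 1 + r) - 1 = Q + 2 * p + r + 1 by omega,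
    show Q + p + 1 - 1 = Q + p by omega, show Q + p + 1 + r - (Q + p + 1) = r by omega]
  rw [show Q + 2 * p + 1 - (Q + p) = p + 1 by omega] at hA
  rw [show Q + 2 * p + r + 1 - r = Q + 2 * p + 1 by omega] at hB
  refine mul_left_cancel₀ (by positivity : ((Q + 2 * p + 1 : ℕ) : ℚ) ≠ 0) ?_
  have hA' : ((Q + 2 * p).choose (Q + p) : ℚ) * (Q + 2 * p + 1 : ℕ) =
      ((Q + 2 * p + 1).choose (Q + p) : ℚ) * (p + 1 : ℕ) := by exact_mod_cast hA
  have hB' : ((Q + 2 * p + r).choose r : ℚ) * (Q + 2 * p + r + 1 : ℕ) =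
      ((Q + 2 * p + r + 1).choose r : ℚ) * (Q + 2 * p + 1 : ℕ) := by exact_mod_cast hB
  push_cast at hA' hB' ⊢
  linear_combination ((Q + 2 * p + r).choose r : ℚ) * (↑Q + 2 * ↑p + ↑r + 1) * hA' +
    ((Q + 2 * p + 1).choose (Q + p) : ℚ) * (↑p + 1) * hB'

/-- Gosper's algorithm: `Q ↦ gosperFactor l m Q * innerTerm l m Q` is an antidifference of
`Q ↦ m (m + 1) Q * innerTerm l m Q` on `0 ≤ Q < l`. -/
def gosperFactor (l m : ℕ) (q : ℚ) : ℚ := m * q ^ 2 - (m ^ 2 + l * m - l) * q - l * (m + l)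

lemma gosperFactor_antidiff {l m Q : ℕ} (hQ : Q < l) (hlm : l ≤ m) :
    m * (m + 1) * Q * innerTerm l m Q =
      gosperFactor l m (Q + 1 : ℕ) * innerTerm l m (Q + 1) -
        gosperFactor l m Q * innerTerm l m Q := by
  have hstep := innerTerm_succ hQ hlm
  refine mul_left_cancel₀ (by
    have : (Q : ℚ) + 1 ≤ l := by exact_mod_cast hQ
    have : (l : ℚ) ≤ m := by exact_mod_cast hlm
    linarith : ((l : ℚ) + m - Q - 1) ≠ 0) ?_
  simp only [gosperFactor]
  push_cast
  linear_combination
    -(m * ((Q : ℚ) + 1) ^ 2 - (m ^ 2 + l * m - l) * (Q + 1) - l * (m + l)) * hstep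

lemma sum_mul_innerTerm {l m : ℕ} (hlm : l ≤ m) :
    m * (m + 1) * ∑ Q ∈ range (l + 1), Q * innerTerm l m Q = l * (l + m) * innerTerm l m 0 := by
  rw [mul_sum, sum_range_succ, sum_congr rfl fun Q hQ =>
      (mul_assoc _ _ _).symm.trans (gosperFactor_antidiff (mem_range.1 hQ) hlm),
    sum_range_sub (fun Q : ℕ => gosperFactor l m Q * innerTerm l m Q)]
  simp only [gosperFactor, Nat.cast_zero]
  ring

lemma add_mul_innerTerm_zero {l m : ℕ} (hl : 1 ≤ l) (hlm : l ≤ m) :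
    (l + m) * innerTerm l m 0 = (m + 1) * m.choose l * (m + l).choose (m + 1) := by
  have hsymm₁ : (l + m - 1).choose (m - l) = (l + m - 1).choose (2 * l - 1) :=
    Nat.choose_symm_of_eq_add (show l + m - 1 = (m - l) + (2 * l - 1) by omega)
  have hsymm₂ : (m + l).choose (m + 1) = (l + m).choose (l - 1) :=
    (Nat.choose_symm_of_eq_add (show m + l = (m + 1) + (l - 1) by omega)).trans (by rw [add_comm])
  have hmul := Nat.choose_mul (n := l + m - 1) (k := 2 * l - 1) (s := l - 1) (by omega)
  rw [show l + m - 1 - (l - 1) = m by omega, show 2 * l - 1 - (l - 1) = l by omega] at hmul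
  have habsorb := Nat.choose_mul_succ_eq (l + m - 1) (l - 1)
  rw [show l + m - 1 + 1 = l + m by omega, show l + m - (l - 1) = m + 1 by omega] at habsorb
  have key : (l + m) * ((2 * l - 1).choose (l - 1) * (l + m - 1).choose (m - l)) =
      (m + 1) * m.choose l * (m + l).choose (m + 1) := by
    rw [hsymm₁, hsymm₂, mul_comm ((2 * l - 1).choose _), hmul]
    linear_combination (m.choose l) * habsorb
  simp only [innerTerm, Nat.sub_zero]
  exact_mod_cast key

lemma mul_innerSum_eq_sum {l : ℕ} (hl : 1 ≤ l) (m : ℕ) :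
    l * innerSum l m = ∑ Q ∈ range (l + 1), Q * innerTerm l m Q := by
  rw [innerSum, mul_sum]
  refine sum_congr rfl fun Q hQ => ?_
  have hD : (l : ℚ) * (dyckReturnSet l Q).ncard = Q * (2 * l - Q - 1).choose (l - 1) := by
    exact_mod_cast mul_ncard_dyckReturnSet hl (Nat.lt_succ_iff.1 (mem_range.1 hQ))
  rw [innerTerm, Nat.cast_mul, ← mul_assoc, hD, mul_assoc]

theorem mul_innerSum {l m : ℕ} (hlm : l ≤ m) (hm : 1 ≤ m) :
    m * innerSum l m = m.choose l * (m + l).choose (m + 1) := by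
  rcases Nat.eq_zero_or_pos l with rfl | hl
  · simp [innerSum, Nat.choose_eq_zero_of_lt (Nat.sub_lt hm one_pos)]
  have hsum := sum_mul_innerTerm hlm
  rw [← mul_innerSum_eq_sum hl, ← mul_assoc, mul_assoc (l : ℚ), add_mul_innerTerm_zero hl hlm]
    at hsum
  refine mul_left_cancel₀ (by positivity : (l : ℚ) * (m + 1) ≠ 0) ?_
  linear_combination hsum

lemma choose_mul_choose_sub {k m l : ℕ} (hk : 1 ≤ k) (hl : l ≤ k) :
    (m + l).choose (m + 1) * (k + m).choose (k - l) =
      (k + m).choose (m + 1) * (k - 1).choose (k - l) := by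
  rcases Nat.eq_zero_or_pos l with rfl | hl₀
  · simp [Nat.choose_eq_zero_of_lt (Nat.sub_lt hk one_pos)]
  have hmul := Nat.choose_mul (n := k + m) (k := m + l) (s := m + 1) (by omega)
  rw [show k + m - (m + 1) = k - 1 by omega, show m + l - (m + 1) = l - 1 by omega] at hmul
  rw [Nat.choose_symm_of_eq_add (show k + m = (k - l) + (m + l) by omega),
    Nat.choose_symm_of_eq_add (show k - 1 = (k - l) + (l - 1) by omega), mul_comm, hmul]

lemma sum_choose_mul_choose_sub (k m : ℕ) :
    ∑ l ∈ range (min k m + 1), m.choose l * (k - 1).choose (k - l) =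
      (m + (k - 1)).choose k := by
  rw [Nat.add_choose_eq, Finset.Nat.sum_antidiagonal_eq_sum_range_succ_mk]
  refine sum_subset (fun l hl => by simp at hl ⊢; omega) fun l hl hl' => ?_
  simp only [mem_range] at hl hl'
  rw [Nat.choose_eq_zero_of_lt (by omega : m < l), zero_mul]

theorem sum_innerSum_mul_choose {k m : ℕ} (hk : 1 ≤ k) (hm : 1 ≤ m) :
    ∑ l ∈ range (min k m + 1), innerSum l m * (k + m).choose (k - l) =
      1 / ((k + m : ℕ) : ℚ) * (k + m).choose k * (k + m).choose (k - 1) := by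
  have hterm : ∀ l ∈ range (min k m + 1), (m : ℚ) * (innerSum l m * (k + m).choose (k - l)) =
      (k + m).choose (m + 1) * (m.choose l * (k - 1).choose (k - l) : ℕ) := fun l hl => by
    have hl := mem_range.1 hl
    rw [← mul_assoc, mul_innerSum (by omega) hm, mul_assoc, ← Nat.cast_mul,
      choose_mul_choose_sub hk (by omega)]
    push_cast
    ring
  have habsorb := Nat.choose_mul_succ_eq (m + (k - 1)) k
  rw [show m + (k - 1) + 1 = k + m by omega, show k + m - k = m by omega] at habsorb
  have hsymm : (k + m).choose (k - 1) = (k + m).choose (m + 1) :=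
    Nat.choose_symm_of_eq_add (by omega)
  have hsum : (m : ℚ) * ∑ l ∈ range (min k m + 1), innerSum l m * (k + m).choose (k - l) =
      (k + m).choose (m + 1) * (m + (k - 1)).choose k := by
    rw [mul_sum, sum_congr rfl hterm, ← mul_sum, ← Nat.cast_sum,
      sum_choose_mul_choose_sub]
  refine mul_left_cancel₀ (by positivity : (m : ℚ) ≠ 0) ?_
  rw [hsum, hsymm]
  field_simp
  have hq : ((m + (k - 1)).choose k : ℚ) * (k + m : ℕ) = (k + m).choose k * m := by
    exact_mod_cast habsorb
  push_cast at hq ⊢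
  linear_combination ((k + m).choose (m + 1) : ℚ) * hq

end NarayanaDecomposition

open NarayanaDecomposition in
/-- Decomposition of the Narayana number `N(s,k) = (1/s) C(s,k) C(s,k-1)` as
`Σ_{l=0}^{min(k,s-k)} Σ_{Q=0}^{l} D(l,Q) C(l-Q+s-k-1, s-k-l) C(s, k-l)`,
where `D(l,Q)` counts Dyck paths of length `2l` with exactly `Q` returns to 0. -/
theorem narayana_decomposition (s k : ℕ) (hk1 : 1 ≤ k) (hks : k ≤ s) :
    (1 / (s : ℚ)) * (s.choose k : ℚ) * (s.choose (k - 1) : ℚ)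
      = ∑ l ∈ Finset.range (min k (s - k) + 1), ∑ Q ∈ Finset.range (l + 1),
          ((dyckReturnSet l Q).ncard : ℚ) *
            ((l - Q + s - k - 1).choose (s - k - l) : ℚ) *
            (s.choose (k - l) : ℚ) := by
  obtain ⟨m, rfl⟩ := Nat.exists_eq_add_of_le hks
  have hinner : ∀ l ∈ Finset.range (min k m + 1), ∑ Q ∈ Finset.range (l + 1),
      ((dyckReturnSet l Q).ncard : ℚ) * ((l - Q + (k + m) - k - 1).choose (m - l) : ℚ) *
        ((k + m).choose (k - l) : ℚ) = innerSum l m * (k + m).choose (k - l) := fun l _ => by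
    rw [innerSum, Finset.sum_mul]
    refine Finset.sum_congr rfl fun Q _ => ?_
    rw [show l - Q + (k + m) - k - 1 = l - Q + m - 1 by omega]
  rw [Nat.add_sub_cancel_left, Finset.sum_congr rfl hinner]
  rcases Nat.eq_zero_or_pos m with rfl | hm
  · simp [innerSum, ncard_dyckReturnSet, firstPassage, Nat.choose_symm hk1]
    field_simp
  · exact (sum_innerSum_mul_choose hk1 hm).symm
end

section
/- Let γ ≥ 1, σ > 0, u₊ = σ²(1+√γ)², and let s_N be a sequence of positive integers with s_N → ∞. Then Σ_{k=1}^{s_N} (N/s_N) C(s_N,k) C(s_N,k-1) γ^k σ^{2s_N} = O(u₊^{s_N}) provided N = O(s_N^{3/2}) (in particular for s_N ~ c N^{2/3}). -/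
/-!
Write `x = √γ` and `a k = C(s,k) xᵏ`, so that `∑ a k = (1 + x)ˢ` and the sum in question is
`σ²ˢ (N/s) x ∑ a k a (k+1) ≤ σ²ˢ (N/s) x (1 + x)ˢ max a`. Since `N/s = O(√s)`, it suffices that
`max a = O((1 + x)ˢ / √s)`. At a mode `m` we have `x (s - m) ≤ m + 1`, so `m ≥ (s - 1)/2` as
`x ≥ 1`; hence for the `J ≈ √s/2` indices `k` just below `m` the ratios `a (k+1) / a k` are at
most `1 + O(J/s)`. These `J + 1` terms are therefore all at least `e^{-(1+x)} a m`, and they sum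
to at most `(1 + x)ˢ`.
-/

open Filter

open Finset

theorem le_pow_mul_of_forall_le_mul {α : Type*} [Semiring α] [PartialOrder α] [IsOrderedRing α]
    {f : ℕ → α} {r : α} (hr : 0 ≤ r) {n j : ℕ}
    (h : ∀ k, n ≤ k → k < n + j → f (k + 1) ≤ r * f k) : f (n + j) ≤ r ^ j * f n := by
  induction j with
  | zero => simp
  | succ j ih =>
    calc f (n + j + 1) ≤ r * f (n + j) := h _ le_self_add (by omega)
      _ ≤ r * (r ^ j * f n) := by
        gcongr
        exact ih fun k hnk hk => h k hnk (by omega)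
      _ = r ^ (j + 1) * f n := by rw [pow_succ', mul_assoc]

theorem exists_four_mul_sq_le_and_sqrt_le (s : ℕ) :
    ∃ J : ℕ, 4 * J ^ 2 ≤ s ∧ √s ≤ 2 * (J + 1) := by
  refine ⟨Nat.sqrt s / 2, ?_, Real.real_sqrt_le_nat_sqrt_succ.trans ?_⟩
  · calc 4 * (Nat.sqrt s / 2) ^ 2 = (2 * (Nat.sqrt s / 2)) ^ 2 := by ring
      _ ≤ Nat.sqrt s ^ 2 := Nat.pow_le_pow_left (Nat.mul_div_le _ 2) 2
      _ ≤ s := Nat.sqrt_le' s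
  · exact_mod_cast (by omega : Nat.sqrt s + 1 ≤ 2 * (Nat.sqrt s / 2 + 1))

def binomTerm (s : ℕ) (x : ℝ) (k : ℕ) : ℝ := s.choose k * x ^ k

namespace binomTerm

variable {s : ℕ} {x : ℝ}

theorem nonneg (hx : 0 ≤ x) (k : ℕ) : 0 ≤ binomTerm s x k := by
  unfold binomTerm; positivity

theorem pos (hx : 0 < x) {k : ℕ} (hk : k ≤ s) : 0 < binomTerm s x k := by
  unfold binomTerm; have := Nat.choose_pos hk; positivity

theorem eq_zero_of_lt {k : ℕ} (hk : s < k) : binomTerm s x k = 0 := by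
  simp [binomTerm, Nat.choose_eq_zero_of_lt hk]

theorem sum_range : ∑ k ∈ range (s + 1), binomTerm s x k = (1 + x) ^ s := by
  rw [add_comm 1 x, add_pow]
  exact sum_congr rfl fun k _ => by simp [binomTerm, mul_comm]

theorem succ_mul {k : ℕ} (hk : k ≤ s) :
    binomTerm s x (k + 1) * (k + 1) = binomTerm s x k * (x * (s - k)) := by
  have h : (s.choose (k + 1) * (k + 1) : ℝ) = s.choose k * (s - k) := by
    rw [← Nat.cast_sub hk]; exact_mod_cast Nat.choose_succ_right_eq s k
  unfold binomTerm
  linear_combination x ^ (k + 1) * h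

theorem succ_le_mul {k : ℕ} (hx : 0 ≤ x) (hk : k ≤ s) {r : ℝ}
    (h : x * (s - k) ≤ r * (k + 1)) :
    binomTerm s x (k + 1) ≤ r * binomTerm s x k := by
  refine le_of_mul_le_mul_right ?_ (by positivity : (0 : ℝ) < k + 1)
  calc binomTerm s x (k + 1) * (k + 1) = binomTerm s x k * (x * (s - k)) := succ_mul hk
    _ ≤ binomTerm s x k * (r * (k + 1)) := mul_le_mul_of_nonneg_left h (nonneg hx k)
    _ = r * binomTerm s x k * (k + 1) := by ring

theorem mul_sub_le_of_succ_le {m : ℕ} (hx : 0 < x) (hm : m ≤ s)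
    (hmode : binomTerm s x (m + 1) ≤ binomTerm s x m) : x * (s - m) ≤ m + 1 := by
  refine le_of_mul_le_mul_left ?_ (pos hx hm)
  rw [← succ_mul hm]
  exact mul_le_mul_of_nonneg_right hmode (by positivity)

theorem exists_max (hx : 0 ≤ x) : ∃ m ≤ s, ∀ k, binomTerm s x k ≤ binomTerm s x m := by
  obtain ⟨m, hm, hmax⟩ := exists_max_image (range (s + 1)) (binomTerm s x) ⟨0, by simp⟩
  refine ⟨m, Nat.lt_succ_iff.mp (mem_range.mp hm), fun k => ?_⟩
  rcases le_or_gt k s with hk | hk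
  · exact hmax k (mem_range.mpr (Nat.lt_succ_of_le hk))
  · rw [eq_zero_of_lt hk]; exact nonneg hx m

theorem add_one_mul_le_pow_mul {m J : ℕ} {r : ℝ} (hx : 0 ≤ x) (hr : 1 ≤ r) (hm : m ≤ s)
    (hJm : J ≤ m)
    (hstep : ∀ k, m - J ≤ k → k < m → binomTerm s x (k + 1) ≤ r * binomTerm s x k) :
    (J + 1) * binomTerm s x m ≤ r ^ J * (1 + x) ^ s := by
  have hwindow : ∀ k ∈ Ico (m - J) (m + 1), binomTerm s x m ≤ r ^ J * binomTerm s x k := by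
    intro k hk
    obtain ⟨hk1, hk2⟩ := mem_Ico.mp hk
    have h := le_pow_mul_of_forall_le_mul (f := binomTerm s x) (n := k) (j := m - k)
      (by linarith) fun i hi1 hi2 => hstep i (by omega) (by omega)
    rw [Nat.add_sub_cancel' (Nat.lt_succ_iff.mp hk2)] at h
    exact h.trans (mul_le_mul_of_nonneg_right (pow_le_pow_right₀ hr (by omega)) (nonneg hx k))
  have hsub : Ico (m - J) (m + 1) ⊆ range (s + 1) := fun k hk => by
    simp only [mem_Ico, mem_range] at hk ⊢; omega
  calc (J + 1) * binomTerm s x m = #(Ico (m - J) (m + 1)) • binomTerm s x m := by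
        rw [Nat.card_Ico, nsmul_eq_mul, show m + 1 - (m - J) = J + 1 by omega]; push_cast; rfl
    _ ≤ ∑ k ∈ Ico (m - J) (m + 1), r ^ J * binomTerm s x k := card_nsmul_le_sum _ _ _ hwindow
    _ = r ^ J * ∑ k ∈ Ico (m - J) (m + 1), binomTerm s x k := (mul_sum _ _ _).symm
    _ ≤ r ^ J * (1 + x) ^ s := by
        rw [← sum_range]
        exact mul_le_mul_of_nonneg_left
          (sum_le_sum_of_subset_of_nonneg hsub fun k _ _ => nonneg hx k) (by positivity)

theorem sqrt_mul_le_of_succ_le {m J : ℕ} (hx : 1 ≤ x) (hm : m ≤ s)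
    (hmode : binomTerm s x (m + 1) ≤ binomTerm s x m) (hJ : 4 * J ^ 2 ≤ s)
    (hsqrt : √s ≤ 2 * (J + 1)) :
    √s * binomTerm s x m ≤ 2 * Real.exp (1 + x) * (1 + x) ^ s := by
  have hJ2 : 4 * (J : ℝ) ^ 2 ≤ s := by exact_mod_cast hJ
  have hmx := mul_sub_le_of_succ_le (by linarith) hm hmode
  have hsm : (s : ℝ) ≤ 2 * m + 1 := by
    have : (0 : ℝ) ≤ s - m := by rw [sub_nonneg]; exact_mod_cast hm
    nlinarith
  have hJs : 4 * (J : ℝ) ≤ s + 1 := by nlinarith [sq_nonneg ((s : ℝ) - 1)]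
  have hJm : J ≤ m := by
    have : 4 * J ≤ s + 1 := by exact_mod_cast hJs
    have : s ≤ 2 * m + 1 := by exact_mod_cast hsm
    omega
  set u : ℝ := 4 * (1 + x) * J / (s + 1)
  -- Below the mode the index stays at least `(s + 1) / 4`, which caps the ratios at `1 + u`.
  have hstep :
      ∀ k, m - J ≤ k → k < m → binomTerm s x (k + 1) ≤ (1 + u) * binomTerm s x k := by
    intro k hk1 hk2
    refine succ_le_mul (by linarith) (by omega) ?_
    have hkJ : (m : ℝ) ≤ k + J := by exact_mod_cast (by omega : m ≤ k + J)
    have hkm : (k : ℝ) ≤ m := by exact_mod_cast hk2.le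
    have hk : (s + 1) / 4 ≤ (k : ℝ) + 1 := by linarith
    have huJ : (1 + x) * J = u * ((s + 1) / 4) := by simp only [u]; field_simp
    calc x * (s - k) = x * (s - m) + x * (m - k) := by ring
      _ ≤ (k + 1) + (1 + x) * J := by nlinarith
      _ ≤ (1 + u) * (k + 1) := by rw [huJ]; nlinarith [show 0 ≤ u by positivity]
  have hexp : (1 + u) ^ J ≤ Real.exp (1 + x) :=
    calc (1 + u) ^ J ≤ Real.exp u ^ J := by gcongr; linarith [Real.add_one_le_exp u]
      _ = Real.exp (J * u) := (Real.exp_nat_mul u J).symm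
      _ ≤ Real.exp (1 + x) := by
        gcongr
        rw [show J * u = (1 + x) * (4 * J ^ 2 / (s + 1)) by ring]
        exact mul_le_of_le_one_right (by linarith) ((div_le_one (by positivity)).mpr (by linarith))
  calc √s * binomTerm s x m ≤ 2 * ((J + 1) * binomTerm s x m) := by
        rw [← mul_assoc]; exact mul_le_mul_of_nonneg_right hsqrt (nonneg (by linarith) m)
    _ ≤ 2 * ((1 + u) ^ J * (1 + x) ^ s) := mul_le_mul_of_nonneg_left
        (add_one_mul_le_pow_mul (by linarith) (by linarith [show 0 ≤ u by positivity]) hm hJm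
          hstep) zero_le_two
    _ ≤ 2 * Real.exp (1 + x) * (1 + x) ^ s := by
        rw [mul_assoc]; gcongr

theorem sqrt_mul_le (hx : 1 ≤ x) (k : ℕ) :
    √s * binomTerm s x k ≤ 2 * Real.exp (1 + x) * (1 + x) ^ s := by
  obtain ⟨m, hm, hmax⟩ := exists_max (s := s) (by linarith : 0 ≤ x)
  obtain ⟨J, hJ, hsqrt⟩ := exists_four_mul_sq_le_and_sqrt_le s
  calc √s * binomTerm s x k ≤ √s * binomTerm s x m := by gcongr; exact hmax k
    _ ≤ 2 * Real.exp (1 + x) * (1 + x) ^ s :=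
      sqrt_mul_le_of_succ_le hx hm (hmax (m + 1)) hJ hsqrt

end binomTerm

theorem sum_choose_mul_choose_pred_eq (s : ℕ) (x : ℝ) :
    ∑ k ∈ Icc 1 s, (s.choose k : ℝ) * s.choose (k - 1) * (x ^ 2) ^ k =
      x * ∑ k ∈ range s, binomTerm s x k * binomTerm s x (k + 1) := by
  rw [← Ico_add_one_right_eq_Icc, sum_Ico_eq_sum_range, Nat.add_sub_cancel, mul_sum]
  refine sum_congr rfl fun k _ => ?_
  simp only [binomTerm, add_comm 1 k, Nat.add_sub_cancel]
  ring

theorem sqrt_mul_sum_choose_mul_choose_pred_le {x : ℝ} (hx : 1 ≤ x) (s : ℕ) :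
    √s * ∑ k ∈ Icc 1 s, (s.choose k : ℝ) * s.choose (k - 1) * (x ^ 2) ^ k ≤
      2 * x * Real.exp (1 + x) * ((1 + x) ^ 2) ^ s := by
  have hx0 : 0 ≤ x := by linarith
  have hsum : ∑ k ∈ range s, binomTerm s x k ≤ (1 + x) ^ s := by
    rw [← binomTerm.sum_range]
    exact sum_le_sum_of_subset_of_nonneg (range_subset_range.mpr s.le_succ)
      fun k _ _ => binomTerm.nonneg hx0 k
  rw [sum_choose_mul_choose_pred_eq, mul_left_comm, mul_sum]
  calc x * ∑ k ∈ range s, √s * (binomTerm s x k * binomTerm s x (k + 1))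
      ≤ x * ∑ k ∈ range s, binomTerm s x k * (2 * Real.exp (1 + x) * (1 + x) ^ s) := by
        refine mul_le_mul_of_nonneg_left (sum_le_sum fun k _ => ?_) hx0
        rw [mul_left_comm]
        exact mul_le_mul_of_nonneg_left (binomTerm.sqrt_mul_le hx _) (binomTerm.nonneg hx0 k)
    _ = x * (2 * Real.exp (1 + x) * (1 + x) ^ s) * ∑ k ∈ range s, binomTerm s x k := by
        rw [← sum_mul]; ring
    _ ≤ x * (2 * Real.exp (1 + x) * (1 + x) ^ s) * (1 + x) ^ s := by gcongr
    _ = 2 * x * Real.exp (1 + x) * ((1 + x) ^ 2) ^ s := by rw [← pow_mul]; ring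

theorem div_le_mul_sqrt_of_le_mul_rpow {a b c : ℝ} (hb : 0 ≤ b)
    (h : a ≤ c * b ^ ((3 : ℝ) / 2)) :
    a / b ≤ c * √b := by
  rcases hb.eq_or_lt with rfl | hb
  · simp
  rw [show (3 : ℝ) / 2 = 1 + 1 / 2 by norm_num, Real.rpow_add hb, Real.rpow_one,
    ← Real.sqrt_eq_rpow] at h
  rw [div_le_iff₀ hb]
  linarith

theorem narayana_weighted_sum_bigO_general (γ σ : ℝ) (hγ : 1 ≤ γ)
    (s N : ℕ → ℕ)
    (hN : ∃ c > 0, ∀ n, (N n : ℝ) ≤ c * (s n : ℝ) ^ ((3 : ℝ) / 2)) :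
    ∃ C > 0, ∀ n,
      ∑ k ∈ Finset.Icc 1 (s n),
          ((N n : ℝ) / (s n : ℝ)) * ((s n).choose k : ℝ) * ((s n).choose (k - 1) : ℝ) *
            γ ^ k * σ ^ (2 * s n)
        ≤ C * (σ ^ 2 * (1 + Real.sqrt γ) ^ 2) ^ (s n) := by
  obtain ⟨c, hc, hcN⟩ := hN
  set x := √γ
  have hx : 1 ≤ x := Real.one_le_sqrt.mpr hγ
  have hγx : γ = x ^ 2 := (Real.sq_sqrt (by linarith)).symm
  refine ⟨c * (2 * x * Real.exp (1 + x)), by positivity, fun n => ?_⟩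
  have hNs := div_le_mul_sqrt_of_le_mul_rpow (Nat.cast_nonneg _) (hcN n)
  have hsum := sqrt_mul_sum_choose_mul_choose_pred_le hx (s n)
  calc ∑ k ∈ Icc 1 (s n), (N n : ℝ) / s n * (s n).choose k * (s n).choose (k - 1) *
          γ ^ k * σ ^ (2 * s n)
      = (N n : ℝ) / s n * (σ ^ 2) ^ s n *
          ∑ k ∈ Icc 1 (s n), ((s n).choose k : ℝ) * (s n).choose (k - 1) * (x ^ 2) ^ k := by
        rw [mul_sum, ← hγx, ← pow_mul]
        exact sum_congr rfl fun k _ => by ring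
    _ ≤ c * √(s n) * (σ ^ 2) ^ s n *
          ∑ k ∈ Icc 1 (s n), ((s n).choose k : ℝ) * (s n).choose (k - 1) * (x ^ 2) ^ k := by
        gcongr
    _ ≤ c * (σ ^ 2) ^ s n * (2 * x * Real.exp (1 + x) * ((1 + x) ^ 2) ^ s n) := by
        rw [mul_right_comm _ (√_), mul_assoc _ (√_)]
        gcongr
    _ = c * (2 * x * Real.exp (1 + x)) * (σ ^ 2 * (1 + x) ^ 2) ^ s n := by rw [mul_pow]; ring

/-- For `γ ≥ 1`, `σ > 0`, and a sequence `s_N → ∞` with `N = O(s_N^{3/2})`,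
one has `Σ_{k=1}^{s_N} (N/s_N) C(s_N,k) C(s_N,k-1) γ^k σ^{2 s_N} = O(u₊^{s_N})`,
where `u₊ = σ²(1+√γ)²`. -/
theorem narayana_weighted_sum_bigO (γ σ : ℝ) (hγ : 1 ≤ γ) (hσ : 0 < σ)
    (s N : ℕ → ℕ) (hs : Tendsto s atTop atTop)
    (hN : ∃ c > 0, ∀ n, (N n : ℝ) ≤ c * (s n : ℝ) ^ ((3 : ℝ) / 2)) :
    ∃ C > 0, ∀ n,
      ∑ k ∈ Finset.Icc 1 (s n),
          ((N n : ℝ) / (s n : ℝ)) * ((s n).choose k : ℝ) * ((s n).choose (k - 1) : ℝ) *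
            γ ^ k * σ ^ (2 * s n)
        ≤ C * (σ ^ 2 * (1 + Real.sqrt γ) ^ 2) ^ (s n) :=
  narayana_weighted_sum_bigO_general γ σ hγ s N hN
end

section
/- Fix γ ≥ 1 and let s → ∞, with k̂ = ⌊(√γ/(1+√γ)) s⌋ + 1. Then max_{1 ≤ k ≤ s} (C(s,k))² γ^k is asymptotically equivalent to (C(s,k̂))² γ^{k̂}, which is asymptotically (1+√γ)^{2s} · (1+√γ)²/(s√γ) · 1/(2π). -/
open Filter

/-- `k̂ = ⌊(√γ/(1+√γ)) s⌋ + 1`. -/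
noncomputable def khat (γ : ℝ) (s : ℕ) : ℕ :=
  ⌊(Real.sqrt γ / (1 + Real.sqrt γ)) * (s : ℝ)⌋₊ + 1

/-
With `b = √γ` and `a = b / (1 + b)`, consecutive terms of `k ↦ C(s,k)² γ^k` have ratio
`((s - k) / (k + 1))² γ`, which is at least `1` exactly when `k + 1 ≤ (s - k) b`. So the terms
increase up to `⌊a s⌋` and decrease from `k̂ = ⌊a s⌋ + 1` on; the maximum is the larger of these
two terms, and their ratio `(k̂ / (s + 1 - k̂))² / γ` tends to `a² / ((1 - a)² γ) = 1`.

Stirling's formula gives `C(s,k) ~ √(s / (2π k (s-k))) s^s / (k^k (s-k)^(s-k))` when `k` and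
`s - k` tend to infinity. Since `a (1 + b) = b` and `(1 - a)(1 + b) = 1`, at `k = k̂` the main
factor times `b^k̂` is `(1 + b)^s (a s / k̂)^k̂ ((1 - a) s / (s - k̂))^(s - k̂)`, and the product
of the last two factors tends to `1` because `k̂ - a s ∈ (0, 1]` and
`x log (t / x) = t - x + O((x - t)² / t)`.
-/

open Asymptotics Topology Real

theorem isGreatest_image_max_of_unimodal {α : Type*} [LinearOrder α] {f : ℕ → α} {S : Set ℕ}
    {m : ℕ} (hm : m ∈ S) (hm' : m + 1 ∈ S) (hup : ∀ j < m, f j ≤ f (j + 1))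
    (hdown : ∀ j, m < j → f (j + 1) ≤ f j) : IsGreatest (f '' S) (max (f m) (f (m + 1))) := by
  refine ⟨?_, ?_⟩
  · rcases max_choice (f m) (f (m + 1)) with h | h <;> rw [h]
    exacts [⟨m, hm, rfl⟩, ⟨m + 1, hm', rfl⟩]
  · rintro _ ⟨k, -, rfl⟩
    rcases le_or_gt k m with hkm | hmk
    · have hmono : MonotoneOn f (Set.Iic m) :=
        monotoneOn_of_le_succ Set.ordConnected_Iic fun j _ _ hj =>
          by rw [Order.succ_eq_add_one] at hj ⊢; exact hup j hj
      exact (hmono hkm (Set.mem_Iic.2 le_rfl) hkm).trans (le_max_left _ _)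
    · have hanti : AntitoneOn f (Set.Ici (m + 1)) :=
        antitoneOn_of_succ_le Set.ordConnected_Ici fun j _ hj _ =>
          by rw [Order.succ_eq_add_one]; exact hdown j hj
      exact (hanti (Set.mem_Ici.2 le_rfl) (Set.mem_Ici.2 hmk) hmk).trans (le_max_right _ _)

noncomputable def weightedChooseSq (γ : ℝ) (s k : ℕ) : ℝ := (s.choose k : ℝ) ^ 2 * γ ^ k

section weightedChooseSq

variable {γ : ℝ} {s k : ℕ}

theorem weightedChooseSq_pos (hγ : 0 < γ) (hk : k ≤ s) : 0 < weightedChooseSq γ s k := by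
  have := Nat.choose_pos hk
  unfold weightedChooseSq
  positivity

theorem weightedChooseSq_succ_mul (γ : ℝ) (s k : ℕ) :
    weightedChooseSq γ s (k + 1) * (k + 1 : ℝ) ^ 2 =
      weightedChooseSq γ s k * ((s - k : ℕ) : ℝ) ^ 2 * γ := by
  have h : (s.choose (k + 1) : ℝ) * (k + 1) = s.choose k * (s - k : ℕ) := by
    exact_mod_cast Nat.choose_succ_right_eq s k
  unfold weightedChooseSq
  linear_combination (s.choose (k + 1) * (k + 1) + s.choose k * (s - k : ℕ) : ℝ) * γ ^ (k + 1) * h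

theorem weightedChooseSq_le_succ (hγ : 0 ≤ γ) (h : (k + 1 : ℝ) ≤ (s - k : ℕ) * √γ) :
    weightedChooseSq γ s k ≤ weightedChooseSq γ s (k + 1) := by
  have hsq : (k + 1 : ℝ) ^ 2 ≤ ((s - k : ℕ) : ℝ) ^ 2 * γ := by
    simpa [mul_pow, sq_sqrt hγ] using pow_le_pow_left₀ (by positivity) h 2
  refine le_of_mul_le_mul_right ?_ (by positivity : (0 : ℝ) < (k + 1) ^ 2)
  rw [weightedChooseSq_succ_mul, mul_assoc]
  exact mul_le_mul_of_nonneg_left hsq (by unfold weightedChooseSq; positivity)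

theorem weightedChooseSq_succ_le (hγ : 0 ≤ γ) (h : ((s - k : ℕ) : ℝ) * √γ ≤ k + 1) :
    weightedChooseSq γ s (k + 1) ≤ weightedChooseSq γ s k := by
  have hsq : ((s - k : ℕ) : ℝ) ^ 2 * γ ≤ (k + 1 : ℝ) ^ 2 := by
    simpa [mul_pow, sq_sqrt hγ] using pow_le_pow_left₀ (by positivity) h 2
  refine le_of_mul_le_mul_right ?_ (by positivity : (0 : ℝ) < (k + 1) ^ 2)
  rw [weightedChooseSq_succ_mul, mul_assoc]
  exact mul_le_mul_of_nonneg_left hsq (by unfold weightedChooseSq; positivity)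

end weightedChooseSq

noncomputable def peakFraction (γ : ℝ) : ℝ := √γ / (1 + √γ)

section peakFraction

variable {γ : ℝ} {s : ℕ}

theorem peakFraction_mul : peakFraction γ * (1 + √γ) = √γ :=
  div_mul_cancel₀ _ (by positivity)

theorem one_sub_peakFraction_mul : (1 - peakFraction γ) * (1 + √γ) = 1 := by
  linear_combination (-1 : ℝ) * peakFraction_mul (γ := γ)

theorem one_sub_peakFraction_eq : 1 - peakFraction γ = 1 / (1 + √γ) :=
  eq_one_div_of_mul_eq_one_left one_sub_peakFraction_mul

theorem one_sub_peakFraction_mul_sqrt : (1 - peakFraction γ) * √γ = peakFraction γ := by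
  linear_combination one_sub_peakFraction_mul (γ := γ)

theorem one_sub_peakFraction_sq_mul (hγ : 0 ≤ γ) :
    (1 - peakFraction γ) ^ 2 * γ = peakFraction γ ^ 2 := by
  calc (1 - peakFraction γ) ^ 2 * γ = ((1 - peakFraction γ) * √γ) ^ 2 := by
        rw [mul_pow, sq_sqrt hγ]
    _ = peakFraction γ ^ 2 := by rw [one_sub_peakFraction_mul_sqrt]

theorem peakFraction_nonneg : 0 ≤ peakFraction γ := by
  unfold peakFraction; positivity

theorem peakFraction_pos (hγ : 0 < γ) : 0 < peakFraction γ := by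
  unfold peakFraction; positivity

theorem peakFraction_lt_one : peakFraction γ < 1 :=
  (div_lt_one (by positivity)).2 (lt_one_add _)

theorem khat_eq : khat γ s = ⌊peakFraction γ * s⌋₊ + 1 := rfl

theorem lt_khat : peakFraction γ * s < khat γ s := by
  rw [khat_eq]; push_cast; exact Nat.lt_floor_add_one _

theorem khat_le : (khat γ s : ℝ) ≤ peakFraction γ * s + 1 := by
  rw [khat_eq]; push_cast
  gcongr
  exact Nat.floor_le (by have := peakFraction_nonneg (γ := γ); positivity)

end peakFraction

theorem tendsto_khat_div (γ : ℝ) :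
    Tendsto (fun s : ℕ => (khat γ s : ℝ) / s) atTop (𝓝 (peakFraction γ)) := by
  have hupper : Tendsto (fun s : ℕ => peakFraction γ + 1 / (s : ℝ)) atTop
      (𝓝 (peakFraction γ)) := by
    simpa using tendsto_one_div_atTop_nhds_zero_nat.const_add (peakFraction γ)
  refine tendsto_of_tendsto_of_tendsto_of_le_of_le' tendsto_const_nhds hupper ?_ ?_
  all_goals filter_upwards [eventually_gt_atTop 0] with s hs
  · rw [le_div_iff₀ (by positivity)]; exact lt_khat.le
  · rw [div_le_iff₀ (by positivity), add_mul, one_div_mul_cancel (by positivity)]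
    exact khat_le

theorem eventually_khat_add_le (γ : ℝ) (c : ℕ) : ∀ᶠ s in atTop, khat γ s + c ≤ s := by
  have hlim : Tendsto (fun s : ℕ => (1 - peakFraction γ) * s) atTop atTop :=
    tendsto_natCast_atTop_atTop.const_mul_atTop (sub_pos.2 peakFraction_lt_one)
  filter_upwards [hlim.eventually_ge_atTop (c + 1 : ℝ)] with s hs
  have : (khat γ s + c : ℝ) ≤ s := by linarith [khat_le (γ := γ) (s := s)]
  exact_mod_cast this

theorem tendsto_sub_khat_atTop (γ : ℝ) : Tendsto (fun s => s - khat γ s) atTop atTop :=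
  tendsto_atTop.2 fun c => (eventually_khat_add_le γ c).mono fun s hs => by omega

theorem tendsto_khat_atTop {γ : ℝ} (hγ : 0 < γ) : Tendsto (khat γ) atTop atTop := by
  refine tendsto_natCast_atTop_iff.1 (tendsto_atTop_mono (fun s => lt_khat.le) ?_)
  exact tendsto_natCast_atTop_atTop.const_mul_atTop (peakFraction_pos hγ)

theorem tendsto_sub_khat_div (γ : ℝ) :
    Tendsto (fun s : ℕ => ((s - khat γ s : ℕ) : ℝ) / s) atTop (𝓝 (1 - peakFraction γ)) := by
  refine (tendsto_const_nhds.sub (tendsto_khat_div γ)).congr' ?_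
  filter_upwards [eventually_khat_add_le γ 0, eventually_gt_atTop 0] with s hs hs0
  rw [Nat.cast_sub (by omega), sub_div, div_self (by positivity)]

section sSupAsymptotics

variable {γ : ℝ} {s : ℕ}

theorem isGreatest_weightedChooseSq_image_Icc (hγ : 0 ≤ γ) (hF : 1 ≤ ⌊peakFraction γ * s⌋₊)
    (hs : khat γ s ≤ s) :
    IsGreatest (weightedChooseSq γ s '' Set.Icc 1 s)
      (max (weightedChooseSq γ s ⌊peakFraction γ * s⌋₊) (weightedChooseSq γ s (khat γ s))) := by
  rw [khat_eq] at hs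
  set a := peakFraction γ
  set F := ⌊a * s⌋₊
  have hF_le : (F : ℝ) ≤ a * s :=
    Nat.floor_le (by have := peakFraction_nonneg (γ := γ); positivity)
  have hF_lt : a * s < F + 1 := Nat.lt_floor_add_one _
  have hpeak : (s - a * s) * √γ = a * s := by
    linear_combination (s : ℝ) * one_sub_peakFraction_mul_sqrt (γ := γ)
  refine isGreatest_image_max_of_unimodal ⟨hF, by omega⟩ ⟨by omega, hs⟩
    (fun j hj => weightedChooseSq_le_succ hγ ?_) (fun j hj => weightedChooseSq_succ_le hγ ?_)
  · have hj' : (j + 1 : ℝ) ≤ F := by exact_mod_cast hj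
    have hjs : j ≤ s := by omega
    rw [Nat.cast_sub hjs]
    nlinarith [sqrt_nonneg γ]
  · have hj' : (F + 1 : ℝ) ≤ j := by exact_mod_cast hj
    -- `s - j` truncates to `0` when `j > s`
    have hsub : ((s - j : ℕ) : ℝ) ≤ s - a * s := by
      rcases le_total j s with hjs | hsj
      · rw [Nat.cast_sub hjs]; linarith
      · rw [Nat.sub_eq_zero_of_le hsj, Nat.cast_zero, sub_nonneg]
        exact mul_le_of_le_one_left (by positivity) peakFraction_lt_one.le
    nlinarith [sqrt_nonneg γ]

theorem weightedChooseSq_floor_div_khat (hγ : 0 < γ) (hs : khat γ s ≤ s) :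
    weightedChooseSq γ s ⌊peakFraction γ * s⌋₊ / weightedChooseSq γ s (khat γ s) =
      (khat γ s : ℝ) ^ 2 / (((s : ℝ) + 1 - khat γ s) ^ 2 * γ) := by
  have hstep := weightedChooseSq_succ_mul γ s ⌊peakFraction γ * s⌋₊
  rw [← khat_eq, Nat.cast_sub (by rw [khat_eq] at hs; omega)] at hstep
  have hcast : (khat γ s : ℝ) = ⌊peakFraction γ * s⌋₊ + 1 := by rw [khat_eq]; push_cast; rfl
  have hW := weightedChooseSq_pos hγ hs
  have hd : 0 < ((s : ℝ) + 1 - khat γ s) ^ 2 * γ := by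
    have : (khat γ s : ℝ) ≤ s := by exact_mod_cast hs
    have : 0 < (s : ℝ) + 1 - khat γ s := by linarith
    positivity
  rw [div_eq_div_iff hW.ne' hd.ne']
  rw [hcast] at hd ⊢
  linear_combination -hstep

theorem tendsto_weightedChooseSq_floor_div_khat (hγ : 0 < γ) :
    Tendsto (fun s => weightedChooseSq γ s ⌊peakFraction γ * s⌋₊ /
      weightedChooseSq γ s (khat γ s)) atTop (𝓝 1) := by
  have hk := tendsto_khat_div γ
  have hden : Tendsto (fun s : ℕ => (1 + 1 / (s : ℝ) - khat γ s / s) ^ 2 * γ) atTop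
      (𝓝 ((1 + 0 - peakFraction γ) ^ 2 * γ)) :=
    (((tendsto_one_div_atTop_nhds_zero_nat.const_add 1).sub hk).pow 2).mul_const γ
  have hden_eq : (1 + 0 - peakFraction γ) ^ 2 * γ = peakFraction γ ^ 2 := by
    rw [add_zero, one_sub_peakFraction_sq_mul hγ.le]
  have hne : peakFraction γ ^ 2 ≠ 0 := pow_ne_zero 2 (peakFraction_pos hγ).ne'
  have := (hk.pow 2).div hden (hden_eq ▸ hne)
  rw [hden_eq, div_self hne] at this
  refine this.congr' ?_
  filter_upwards [eventually_khat_add_le γ 0, eventually_gt_atTop 0] with s hs hs0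
  rw [weightedChooseSq_floor_div_khat hγ hs, Pi.div_apply]
  field_simp

theorem tendsto_sSup_div_weightedChooseSq_khat (hγ : 0 < γ) :
    Tendsto (fun s => sSup (weightedChooseSq γ s '' Set.Icc 1 s) /
      weightedChooseSq γ s (khat γ s)) atTop (𝓝 1) := by
  have hmax :=
    (tendsto_weightedChooseSq_floor_div_khat hγ).max (tendsto_const_nhds (x := (1 : ℝ)))
  rw [max_self] at hmax
  refine hmax.congr' ?_
  filter_upwards [eventually_khat_add_le γ 0, (tendsto_khat_atTop hγ).eventually_ge_atTop 2]
    with s hs h2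
  rw [add_zero] at hs
  have hF : 1 ≤ ⌊peakFraction γ * s⌋₊ := by rw [khat_eq] at h2; omega
  have hW := weightedChooseSq_pos hγ hs
  rw [(isGreatest_weightedChooseSq_image_Icc hγ.le hF hs).csSup_eq, ← max_div_div_right hW.le,
    div_self hW.ne']

end sSupAsymptotics

theorem mul_log_div_mem_Icc {t x : ℝ} (ht : 0 < t) (hx : 0 < x) :
    x * log (t / x) ∈ Set.Icc (t - x - (x - t) ^ 2 / t) (t - x) := by
  have htx : 0 < t / x := div_pos ht hx
  constructor
  · have h := mul_le_mul_of_nonneg_left (one_sub_inv_le_log_of_pos htx) hx.le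
    calc t - x - (x - t) ^ 2 / t = x * (1 - (t / x)⁻¹) := by field_simp; ring
      _ ≤ x * log (t / x) := h
  · have h := mul_le_mul_of_nonneg_left (log_le_sub_one_of_pos htx) hx.le
    calc x * log (t / x) ≤ x * (t / x - 1) := h
      _ = t - x := by field_simp

theorem abs_log_div_pow_mul_div_pow_le {t u : ℝ} {K M : ℕ} (ht : 0 < t) (hu : 0 < u)
    (hK : 0 < K) (hM : 0 < M) (hsum : (K : ℝ) + M = t + u) :
    |log ((t / K) ^ K * (u / M) ^ M)| ≤ (K - t) ^ 2 * (t⁻¹ + u⁻¹) := by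
  have hK' : (0 : ℝ) < K := Nat.cast_pos.2 hK
  have hM' : (0 : ℝ) < M := Nat.cast_pos.2 hM
  obtain ⟨hK_lo, hK_hi⟩ := mul_log_div_mem_Icc ht hK'
  obtain ⟨hM_lo, hM_hi⟩ := mul_log_div_mem_Icc hu hM'
  have hMu : (M : ℝ) - u = -(K - t) := by linarith
  rw [log_mul (by positivity) (by positivity), log_pow, log_pow, abs_le]
  rw [hMu, neg_sq] at hM_lo
  constructor
  · have : (K - t) ^ 2 * (t⁻¹ + u⁻¹) = (K - t) ^ 2 / t + (K - t) ^ 2 / u := by ring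
    linarith
  · have : 0 ≤ (K - t) ^ 2 * (t⁻¹ + u⁻¹) := by positivity
    linarith

noncomputable def chooseStirling (n k : ℕ) : ℝ :=
  √(n / (2 * π * k * (n - k : ℕ))) * (n : ℝ) ^ n / ((k : ℝ) ^ k * ((n - k : ℕ) : ℝ) ^ (n - k))

theorem choose_isEquivalent_chooseStirling {K : ℕ → ℕ} (hK : Tendsto K atTop atTop)
    (hM : Tendsto (fun n => n - K n) atTop atTop) :
    (fun n => (n.choose (K n) : ℝ)) ~[atTop] fun n => chooseStirling n (K n) := by
  have hst := Stirling.factorial_isEquivalent_stirling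
  have hK1 := hK.eventually_ge_atTop 1
  have hM1 := hM.eventually_ge_atTop 1
  refine ((hst.div ((hst.comp_tendsto hK).mul (hst.comp_tendsto hM))).congr_left ?_).congr_right
    ?_
  · filter_upwards [hM1] with n hn
    exact (Nat.cast_choose ℝ (by omega)).symm
  · filter_upwards [hK1, hM1] with n hk hm
    obtain ⟨k, m, hkn, hmn⟩ : ∃ k m, K n = k ∧ n - K n = m := ⟨_, _, rfl, rfl⟩
    obtain rfl : n = k + m := by omega
    simp only [chooseStirling, Function.comp_apply, Pi.mul_apply, Pi.div_apply, hkn,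
      Nat.add_sub_cancel_left]
    have hk0 : (0 : ℝ) < k := by rw [← hkn]; exact_mod_cast hk
    have hm0 : (0 : ℝ) < m := by rw [← hmn]; exact_mod_cast hm
    have hsqrt : √(((k + m : ℕ) : ℝ) / (2 * π * k * m)) =
        √(2 * ((k + m : ℕ) : ℝ) * π) / (√(2 * k * π) * √(2 * m * π)) := by
      rw [← sqrt_mul (by positivity), ← sqrt_div' _ (by positivity)]
      congr 1
      field_simp
    rw [hsqrt, div_pow, div_pow, div_pow, pow_add, pow_add]
    field_simp

theorem chooseStirling_sq_mul_pow_div_eq {γ : ℝ} (hγ : 0 < γ) {n k : ℕ} (hk : 0 < k)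
    (hkn : k < n) :
    chooseStirling n k ^ 2 * γ ^ k /
        ((1 + √γ) ^ (2 * n) * ((1 + √γ) ^ 2 / (n * √γ)) * (1 / (2 * π))) =
      (n / k) * (n / (n - k : ℕ)) * (√γ / (1 + √γ) ^ 2) *
        ((peakFraction γ * n / k) ^ k *
          ((1 - peakFraction γ) * n / (n - k : ℕ)) ^ (n - k)) ^ 2 := by
  obtain ⟨m, rfl⟩ := Nat.exists_eq_add_of_le hkn.le
  have hk' : (0 : ℝ) < k := Nat.cast_pos.2 hk
  have hm' : (0 : ℝ) < m := Nat.cast_pos.2 (by omega)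
  have hb : 0 < √γ := sqrt_pos.2 hγ
  have hγb : γ ^ k = (√γ ^ k) ^ 2 := by rw [← pow_mul, mul_comm, pow_mul, sq_sqrt hγ.le]
  simp only [chooseStirling, Nat.add_sub_cancel_left]
  rw [div_pow, mul_pow, sq_sqrt (by positivity), hγb, one_sub_peakFraction_eq, peakFraction]
  simp only [div_pow, mul_pow, one_pow]
  field_simp
  ring

theorem tendsto_div_khat_pow_mul_div_sub_khat_pow {γ : ℝ} (hγ : 0 < γ) :
    Tendsto (fun s : ℕ => (peakFraction γ * s / khat γ s) ^ khat γ s *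
      ((1 - peakFraction γ) * s / (s - khat γ s : ℕ)) ^ (s - khat γ s)) atTop (𝓝 1) := by
  set a := peakFraction γ
  have ha : 0 < a := peakFraction_pos hγ
  have ha' : 0 < 1 - a := sub_pos.2 peakFraction_lt_one
  have hbound : Tendsto (fun s : ℕ => (a * s)⁻¹ + ((1 - a) * s)⁻¹) atTop (𝓝 (0 + 0)) :=
    (tendsto_inv_atTop_zero.comp (tendsto_natCast_atTop_atTop.const_mul_atTop ha)).add
      (tendsto_inv_atTop_zero.comp (tendsto_natCast_atTop_atTop.const_mul_atTop ha'))
  rw [add_zero] at hbound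
  have hlog : Tendsto (fun s : ℕ => log ((a * s / khat γ s) ^ khat γ s *
      ((1 - a) * s / (s - khat γ s : ℕ)) ^ (s - khat γ s))) atTop (𝓝 0) := by
    refine squeeze_zero_norm' ?_ hbound
    filter_upwards [(tendsto_khat_atTop hγ).eventually_ge_atTop 1,
      (tendsto_sub_khat_atTop γ).eventually_ge_atTop 1, eventually_gt_atTop 0] with s hK hM hs
    have hks : khat γ s ≤ s := by omega
    have hδ : ((khat γ s : ℝ) - a * s) ^ 2 ≤ 1 := by
      have := lt_khat (γ := γ) (s := s)
      have := khat_le (γ := γ) (s := s)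
      nlinarith
    rw [norm_eq_abs]
    refine (abs_log_div_pow_mul_div_pow_le (by positivity) (by positivity) hK hM ?_).trans ?_
    · push_cast [hks]; ring
    · exact mul_le_of_le_one_left (by positivity) hδ
  have hexp := (continuous_exp.tendsto 0).comp hlog
  rw [exp_zero] at hexp
  refine hexp.congr' ?_
  filter_upwards [(tendsto_khat_atTop hγ).eventually_ge_atTop 1,
    (tendsto_sub_khat_atTop γ).eventually_ge_atTop 1, eventually_gt_atTop 0] with s hK hM hs
  have : (0 : ℝ) < (s - khat γ s : ℕ) := Nat.cast_pos.2 hM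
  exact exp_log (by positivity)

theorem tendsto_weightedChooseSq_khat_div {γ : ℝ} (hγ : 0 < γ) :
    Tendsto (fun s : ℕ => weightedChooseSq γ s (khat γ s) /
      ((1 + √γ) ^ (2 * s) * ((1 + √γ) ^ 2 / ((s : ℝ) * √γ)) * (1 / (2 * π)))) atTop (𝓝 1) := by
  set a := peakFraction γ
  have hC := choose_isEquivalent_chooseStirling (tendsto_khat_atTop hγ) (tendsto_sub_khat_atTop γ)
  refine (((hC.pow 2).mul (IsEquivalent.refl (u := fun s => γ ^ khat γ s))).div
    IsEquivalent.refl).symm.tendsto_nhds ?_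
  have hinv {f : ℕ → ℝ} {c : ℝ} (hf : Tendsto (fun s : ℕ => f s / s) atTop (𝓝 c)) (hc : c ≠ 0) :
      Tendsto (fun s : ℕ => s / f s) atTop (𝓝 c⁻¹) := by
    simpa only [inv_div] using hf.inv₀ hc
  have ha : a ≠ 0 := (peakFraction_pos hγ).ne'
  have ha' : 1 - a ≠ 0 := (sub_pos.2 peakFraction_lt_one).ne'
  have hlim := (((hinv (tendsto_khat_div γ) ha).mul (hinv (tendsto_sub_khat_div γ) ha')).mul
    (tendsto_const_nhds (x := √γ / (1 + √γ) ^ 2))).mul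
      ((tendsto_div_khat_pow_mul_div_sub_khat_pow hγ).pow 2)
  have hval : a⁻¹ * (1 - a)⁻¹ * (√γ / (1 + √γ) ^ 2) * 1 ^ 2 = 1 := by
    have hb : 0 < √γ := sqrt_pos.2 hγ
    rw [one_sub_peakFraction_eq]
    unfold a peakFraction
    field_simp
  rw [hval] at hlim
  refine hlim.congr' ?_
  filter_upwards [(tendsto_khat_atTop hγ).eventually_ge_atTop 1,
    (tendsto_sub_khat_atTop γ).eventually_ge_atTop 1] with s hK hM
  exact (chooseStirling_sq_mul_pow_div_eq hγ hK (by omega)).symm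

/-- For fixed `γ ≥ 1`, `max_{1 ≤ k ≤ s} (C(s,k))² γ^k` is asymptotically
equivalent to `(C(s,k̂))² γ^{k̂}`, which is itself asymptotically
`(1+√γ)^{2s} (1+√γ)²/(s√γ) · 1/(2π)`. -/
theorem max_binom_sq_weighted_asymptotics (γ : ℝ) (hγ : 1 ≤ γ) :
    Tendsto (fun s : ℕ =>
        sSup ((fun k : ℕ => ((s.choose k : ℝ)) ^ 2 * γ ^ k) '' Set.Icc 1 s) /
          (((s.choose (khat γ s) : ℝ)) ^ 2 * γ ^ (khat γ s)))
      atTop (nhds 1) ∧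
    Tendsto (fun s : ℕ =>
        (((s.choose (khat γ s) : ℝ)) ^ 2 * γ ^ (khat γ s)) /
          ((1 + Real.sqrt γ) ^ (2 * s) *
            ((1 + Real.sqrt γ) ^ 2 / ((s : ℝ) * Real.sqrt γ)) * (1 / (2 * Real.pi))))
      atTop (nhds 1) :=
  ⟨tendsto_sSup_div_weightedChooseSq_khat (by linarith),
    tendsto_weightedChooseSq_khat_div (by linarith)⟩
end

section
/- Let 0 < α < 1 and let s_N, η_N be sequences of positive integers with η_N ≤ s_N. Under the uniform probability on Dyck paths of length 2s_N with exactly k up-steps at odd instants, where k ≤ α s_N, the probability that the path contains η_N consecutive UD 2-steps is at most C₇ s_N² α^{2η_N}·C₉ for constants C₇, C₉ > 0 independent of N and k. More precisely, for fixed even instants s'₁ < s'₂ with s'₂ - s'₁ = 2η_N, the proportion of such paths with η_N UD steps filling [s'₁, s'₂] is at most N(s_N - η_N, k - η_N)/N(s_N, k) ≤ C₉ α^{2η_N}. -/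
/-- The path contains `η` consecutive `UD` 2-steps. -/
def hasConsecUD (s η : ℕ) (f : ℕ → Bool) : Prop :=
  ∃ j, j + η ≤ s ∧ ∀ i < η, f (2 * (j + i)) = true ∧ f (2 * (j + i) + 1) = false

/-!
Encode a Dyck path of length `2s` by the sets `U, D ⊆ {0, …, s - 1}` of its 2-steps that begin
with an up-step and that end with a down-step. The path has `k` up-steps at odd instants iff
`#U = #D = k`, and staying nonnegative becomes a ballot condition on `(U, D)`. Splitting off the
last 2-step gives a Pascal-type recursion solved by the reflection formula, so there are
`N(s, k) = C(s, k) C(s, k - 1) / s` such paths.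

If the 2-steps `j, …, j + η - 1` are all `UD`, deleting them leaves an admissible pair for
`(s - η, k - η)` from which the path is recovered, so at most `(s + 1) N(s - η, k - η)` paths
contain such a block. Finally `C(s - η, k - η) ≤ (k / s)^η C(s, k)`, `k / s ≤ α` and
`s - η ≥ (1 - α) s` give `N(s - η, k - η) ≤ α^(2η) N(s, k) / (α (1 - α))`.
-/

open Finset

/-- `(U, D)` describes the path whose 2-step `m` begins with `U` iff `m ∈ U` and ends with `D` iff
`m ∈ D`; the condition says that its height at each odd instant `2t + 1 < 2s` is positive. -/
def IsBallot (s : ℕ) (U D : Finset ℕ) : Prop :=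
  ∀ t < s, #(D ∩ range t) < #(U ∩ range (t + 1))

instance (s : ℕ) (U D : Finset ℕ) : Decidable (IsBallot s U D) :=
  inferInstanceAs (Decidable (∀ t < s, _))

def ballotPairs (s a b : ℕ) : Finset (Finset ℕ × Finset ℕ) :=
  {p ∈ (range s).powerset ×ˢ (range s).powerset | #p.1 = a ∧ #p.2 = b ∧ IsBallot s p.1 p.2}

lemma mem_ballotPairs {s a b : ℕ} {p : Finset ℕ × Finset ℕ} :
    p ∈ ballotPairs s a b ↔
      p.1 ⊆ range s ∧ p.2 ⊆ range s ∧ #p.1 = a ∧ #p.2 = b ∧ IsBallot s p.1 p.2 := by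
  simp [ballotPairs, and_assoc]

lemma filter_range_inter_range (p : ℕ → Prop) [DecidablePred p] {s t : ℕ} (h : t ≤ s) :
    {m ∈ range s | p m} ∩ range t = {m ∈ range t | p m} := by
  rw [filter_inter, range_inter_range, min_eq_right h]

def upSteps (s : ℕ) (f : ℕ → Bool) : Finset ℕ := {m ∈ range s | f (2 * m) = true}

def downSteps (s : ℕ) (f : ℕ → Bool) : Finset ℕ := {m ∈ range s | f (2 * m + 1) = false}

def stepSets (s : ℕ) (f : ℕ → Bool) : Finset ℕ × Finset ℕ := (upSteps s f, downSteps s f)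

lemma upSteps_inter_range {s t : ℕ} (f : ℕ → Bool) (h : t ≤ s) :
    upSteps s f ∩ range t = upSteps t f :=
  filter_range_inter_range _ h

lemma downSteps_inter_range {s t : ℕ} (f : ℕ → Bool) (h : t ≤ s) :
    downSteps s f ∩ range t = downSteps t f :=
  filter_range_inter_range _ h

lemma card_upSteps_succ (f : ℕ → Bool) (t : ℕ) :
    #(upSteps (t + 1) f) = #(upSteps t f) + if f (2 * t) = true then 1 else 0 := by
  simp only [upSteps, ← Nat.count_eq_card_filter_range, Nat.count_succ]

lemma upCount_succ (f : ℕ → Bool) (t : ℕ) :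
    upCount f (t + 1) = upCount f t + if f t = true then 1 else 0 := by
  simp only [upCount, ← Nat.count_eq_card_filter_range, Nat.count_succ]

lemma upCount_two_mul (f : ℕ → Bool) (t : ℕ) :
    upCount f (2 * t) + #(downSteps t f) = #(upSteps t f) + t := by
  simp only [upCount, upSteps, downSteps, ← Nat.count_eq_card_filter_range]
  induction t with
  | zero => simp
  | succ t ih =>
    rw [show 2 * (t + 1) = 2 * t + 1 + 1 by ring]
    simp only [Nat.count_succ]
    cases f (2 * t) <;> cases f (2 * t + 1) <;>
      simp only [Bool.false_eq_true, Bool.true_eq_false, ↓reduceIte, add_zero] <;> omega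

lemma pathHeight_two_mul (f : ℕ → Bool) (t : ℕ) :
    pathHeight f (2 * t) = 2 * #(upSteps t f) - 2 * #(downSteps t f) := by
  have := upCount_two_mul f t
  unfold pathHeight
  omega

lemma pathHeight_two_mul_add_one_s8 (f : ℕ → Bool) (t : ℕ) :
    pathHeight f (2 * t + 1) = 2 * #(upSteps (t + 1) f) - 2 * #(downSteps t f) - 1 := by
  have := upCount_two_mul f t
  rw [pathHeight, upCount_succ, card_upSteps_succ]
  split_ifs <;> omega

lemma mem_dyckSet_iff {s k : ℕ} {f : ℕ → Bool} :
    f ∈ dyckSet s k ↔ (∀ t, 2 * s ≤ t → f t = false) ∧ stepSets s f ∈ ballotPairs s k k := by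
  have hballot : IsBallot s (upSteps s f) (downSteps s f) ↔
      ∀ t < s, #(downSteps t f) < #(upSteps (t + 1) f) := by
    refine forall₂_congr fun t ht => ?_
    rw [upSteps_inter_range f ht, downSteps_inter_range f ht.le]
  change ((∀ t, 2 * s ≤ t → f t = false) ∧ pathHeight f (2 * s) = 0 ∧
    ∀ t ≤ 2 * s, 0 ≤ pathHeight f t) ∧ #(upSteps s f) = k ↔ _
  rw [mem_ballotPairs, stepSets, hballot, pathHeight_two_mul, and_assoc]
  dsimp only
  refine and_congr_right fun _ => ?_
  constructor
  · rintro ⟨⟨hend, hnonneg⟩, rfl⟩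
    refine ⟨filter_subset _ _, filter_subset _ _, rfl, by omega, fun t ht => ?_⟩
    have := hnonneg (2 * t + 1) (by omega)
    rw [pathHeight_two_mul_add_one_s8] at this
    omega
  · rintro ⟨-, -, rfl, hD, hballot⟩
    refine ⟨⟨by omega, fun t ht => ?_⟩, rfl⟩
    obtain ⟨m, rfl | rfl⟩ := Nat.even_or_odd' t
    · rw [pathHeight_two_mul]
      rcases Nat.lt_or_ge m s with hm | hm
      · have := hballot m hm
        have := card_upSteps_succ f m
        split_ifs at this <;> omega
      · obtain rfl : m = s := by omega
        omega
    · rw [pathHeight_two_mul_add_one_s8]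
      have := hballot m (by omega)
      omega

lemma injOn_stepSets (s k : ℕ) : Set.InjOn (stepSets s) (dyckSet s k) := by
  intro f hf g hg h
  rw [mem_dyckSet_iff] at hf hg
  simp only [stepSets, Prod.mk.injEq, Finset.ext_iff, upSteps, downSteps, mem_filter,
    mem_range] at h
  funext t
  rcases lt_or_ge t (2 * s) with ht | ht
  · obtain ⟨m, rfl | rfl⟩ := Nat.even_or_odd' t
    · have := h.1 m
      revert this
      cases f (2 * m) <;> cases g (2 * m) <;> simp [show m < s by omega]
    · have := h.2 m
      revert this
      cases f (2 * m + 1) <;> cases g (2 * m + 1) <;> simp [show m < s by omega]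
  · rw [hf.1 t ht, hg.1 t ht]

lemma image_stepSets_dyckSet (s k : ℕ) :
    stepSets s '' dyckSet s k = ballotPairs s k k := by
  ext p
  refine ⟨fun ⟨f, hf, hfp⟩ => hfp ▸ (mem_dyckSet_iff.1 hf).2, fun hp => ?_⟩
  have hU : ∀ m ∈ p.1, m < s := fun m hm => mem_range.1 ((mem_ballotPairs.1 hp).1 hm)
  have hD : ∀ m ∈ p.2, m < s := fun m hm => mem_range.1 ((mem_ballotPairs.1 hp).2.1 hm)
  let f : ℕ → Bool := fun t =>
    if t % 2 = 0 then t / 2 ∈ p.1 else t / 2 < s ∧ t / 2 ∉ p.2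
  have hf : stepSets s f = p := by
    ext m <;> simp only [stepSets, upSteps, downSteps, mem_filter, mem_range, f] <;> grind
  refine ⟨f, mem_dyckSet_iff.2 ⟨fun t ht => ?_, hf ▸ hp⟩, hf⟩
  grind

lemma ncard_dyckSet (s k : ℕ) : (dyckSet s k).ncard = #(ballotPairs s k k) := by
  rw [← Set.ncard_coe_finset, ← image_stepSets_dyckSet, (injOn_stepSets s k).ncard_image]

lemma isBallot_succ_iff {s : ℕ} {U D : Finset ℕ} :
    IsBallot (s + 1) U D ↔ IsBallot s U D ∧ #(D ∩ range s) < #(U ∩ range (s + 1)) :=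
  Nat.forall_lt_succ_right

lemma isBallot_inter_range {s : ℕ} {U D : Finset ℕ} :
    IsBallot s (U ∩ range s) (D ∩ range s) ↔ IsBallot s U D := by
  refine forall₂_congr fun t ht => ?_
  rw [inter_assoc, inter_assoc, range_inter_range, range_inter_range,
    min_eq_right ht.le, min_eq_right ht]

def lastSteps (s : ℕ) (p : Finset ℕ × Finset ℕ) : Finset ℕ × Finset ℕ :=
  (p.1 \ range s, p.2 \ range s)

section LastStep

variable {s : ℕ} {Y E : Finset ℕ}

lemma disjoint_of_subset_range_of_subset_singleton (hY : Y ⊆ range s) (hE : E ⊆ {s}) :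
    Disjoint Y E :=
  disjoint_of_subset_left hY (disjoint_of_subset_right hE (by simp))

lemma union_inter_range_eq (hY : Y ⊆ range s) (hE : E ⊆ {s}) : (Y ∪ E) ∩ range s = Y := by
  ext x
  have := @hY x
  have := @hE x
  simp only [mem_inter, mem_union, mem_range, mem_singleton] at *
  grind

lemma union_sdiff_range_eq (hY : Y ⊆ range s) (hE : E ⊆ {s}) : (Y ∪ E) \ range s = E := by
  ext x
  have := @hY x
  have := @hE x
  simp only [mem_sdiff, mem_union, mem_range, mem_singleton] at *
  grind

lemma union_subset_range_succ (hY : Y ⊆ range s) (hE : E ⊆ {s}) : Y ∪ E ⊆ range (s + 1) :=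
  union_subset (hY.trans (range_subset_range.2 s.le_succ)) (hE.trans (by simp))

end LastStep

section LastStepFiber

variable {s A B : ℕ} {E₁ E₂ : Finset ℕ}

lemma lastSteps_card_le {p : Finset ℕ × Finset ℕ} (hp : p ∈ ballotPairs (s + 1) A B)
    (hlast : lastSteps s p = (E₁, E₂)) : #E₁ ≤ A ∧ #E₂ ≤ B ∧ B - #E₂ < A := by
  obtain ⟨hU, -, rfl, rfl, hb⟩ := mem_ballotPairs.1 hp
  simp only [lastSteps, Prod.mk.injEq] at hlast
  obtain ⟨rfl, rfl⟩ := hlast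
  have h₁ := card_inter_add_card_sdiff p.1 (range s)
  have h₂ := card_inter_add_card_sdiff p.2 (range s)
  have := (isBallot_succ_iff.1 hb).2
  rw [inter_eq_left.2 hU] at this
  omega

lemma inter_range_mem_ballotPairs {p : Finset ℕ × Finset ℕ} (hp : p ∈ ballotPairs (s + 1) A B)
    (hlast : lastSteps s p = (E₁, E₂)) :
    (p.1 ∩ range s, p.2 ∩ range s) ∈ ballotPairs s (A - #E₁) (B - #E₂) := by
  obtain ⟨-, -, rfl, rfl, hb⟩ := mem_ballotPairs.1 hp
  simp only [lastSteps, Prod.mk.injEq] at hlast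
  obtain ⟨rfl, rfl⟩ := hlast
  have h₁ := card_inter_add_card_sdiff p.1 (range s)
  have h₂ := card_inter_add_card_sdiff p.2 (range s)
  exact mem_ballotPairs.2 ⟨inter_subset_right, inter_subset_right, by dsimp only; omega,
    by dsimp only; omega,
    isBallot_inter_range.2 (isBallot_succ_iff.1 hb).1⟩

lemma union_mem_ballotPairs_succ {q : Finset ℕ × Finset ℕ} (h₁ : E₁ ⊆ {s}) (h₂ : E₂ ⊆ {s})
    (h : #E₁ ≤ A ∧ #E₂ ≤ B ∧ B - #E₂ < A) (hq : q ∈ ballotPairs s (A - #E₁) (B - #E₂)) :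
    (q.1 ∪ E₁, q.2 ∪ E₂) ∈ ballotPairs (s + 1) A B := by
  obtain ⟨hU, hD, hcU, hcD, hb⟩ := mem_ballotPairs.1 hq
  have hcU' : #(q.1 ∪ E₁) = A := by
    rw [card_union_of_disjoint (disjoint_of_subset_range_of_subset_singleton hU h₁)]
    omega
  have hcD' : #(q.2 ∪ E₂) = B := by
    rw [card_union_of_disjoint (disjoint_of_subset_range_of_subset_singleton hD h₂)]
    omega
  refine mem_ballotPairs.2 ⟨union_subset_range_succ hU h₁, union_subset_range_succ hD h₂,
    hcU', hcD', isBallot_succ_iff.2 ⟨?_, ?_⟩⟩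
  · rwa [← isBallot_inter_range, union_inter_range_eq hU h₁, union_inter_range_eq hD h₂]
  · rw [union_inter_range_eq hD h₂, inter_eq_left.2 (union_subset_range_succ hU h₁), hcU']
    omega

lemma card_filter_lastSteps_eq (h₁ : E₁ ⊆ {s}) (h₂ : E₂ ⊆ {s})
    (h : #E₁ ≤ A ∧ #E₂ ≤ B ∧ B - #E₂ < A) :
    #{p ∈ ballotPairs (s + 1) A B | lastSteps s p = (E₁, E₂)} =
      #(ballotPairs s (A - #E₁) (B - #E₂)) := by
  refine card_nbij' (fun p => (p.1 ∩ range s, p.2 ∩ range s))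
    (fun q => (q.1 ∪ E₁, q.2 ∪ E₂)) (fun p hp => ?_) (fun q hq => ?_) (fun p hp => ?_)
    (fun q hq => ?_)
  · rw [mem_coe, mem_filter] at hp
    exact inter_range_mem_ballotPairs hp.1 hp.2
  · rw [mem_coe] at hq
    rw [mem_coe, mem_filter, lastSteps, union_sdiff_range_eq (mem_ballotPairs.1 hq).1 h₁,
      union_sdiff_range_eq (mem_ballotPairs.1 hq).2.1 h₂]
    exact ⟨union_mem_ballotPairs_succ h₁ h₂ h hq, rfl⟩
  · simp only [mem_coe, mem_filter, lastSteps, Prod.mk.injEq] at hp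
    obtain ⟨-, rfl, rfl⟩ := hp
    simp only [union_comm (_ ∩ _), sdiff_union_inter]
  · rw [mem_coe, mem_ballotPairs] at hq
    simp only [union_inter_range_eq hq.1 h₁, union_inter_range_eq hq.2.1 h₂]

end LastStepFiber

lemma sdiff_range_mem_pair {s : ℕ} {X : Finset ℕ} (hX : X ⊆ range (s + 1)) :
    X \ range s ∈ ({∅, {s}} : Finset (Finset ℕ)) := by
  rw [mem_insert, mem_singleton, ← subset_singleton_iff]
  intro x hx
  rw [mem_sdiff, mem_range] at hx
  have := mem_range.1 (hX hx.1)
  rw [mem_singleton]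
  omega

lemma card_ballotPairs_succ (s A B : ℕ) :
    #(ballotPairs (s + 1) A B) = ∑ E ∈ ({∅, {s}} : Finset (Finset ℕ)) ×ˢ {∅, {s}},
      if #E.1 ≤ A ∧ #E.2 ≤ B ∧ B - #E.2 < A then #(ballotPairs s (A - #E.1) (B - #E.2))
      else 0 := by
  rw [card_eq_sum_card_fiberwise (f := lastSteps s) fun p hp => ?_]
  · refine sum_congr rfl fun E hE => ?_
    simp only [mem_product, mem_insert, mem_singleton, ← subset_singleton_iff] at hE
    split_ifs with h
    · exact card_filter_lastSteps_eq hE.1 hE.2 h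
    · exact card_eq_zero.2 (filter_eq_empty_iff.2 fun p hp hlast => h (lastSteps_card_le hp hlast))
  · obtain ⟨hU, hD, -⟩ := mem_ballotPairs.1 hp
    exact mem_product.2 ⟨sdiff_range_mem_pair hU, sdiff_range_mem_pair hD⟩

lemma card_ballotPairs_zero (a b : ℕ) :
    #(ballotPairs 0 a b) = if a = 0 ∧ b = 0 then 1 else 0 := by
  split_ifs with h
  · obtain ⟨rfl, rfl⟩ := h
    decide
  · rw [card_eq_zero, eq_empty_iff_forall_notMem]
    intro p hp
    obtain ⟨hU, hD, rfl, rfl, -⟩ := mem_ballotPairs.1 hp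
    simp_all [subset_empty]

lemma ballotPairs_zero_left {s : ℕ} (hs : 0 < s) (b : ℕ) : ballotPairs s 0 b = ∅ := by
  rw [eq_empty_iff_forall_notMem]
  intro p hp
  obtain ⟨-, -, hU, -, hb⟩ := mem_ballotPairs.1 hp
  simpa [card_eq_zero.1 hU] using hb 0 hs

lemma card_ballotPairs_succ_succ_succ (s : ℕ) {a b : ℕ} (hba : b ≤ a) :
    #(ballotPairs (s + 1) (a + 1) (b + 1)) =
      #(ballotPairs s a b) + #(ballotPairs s (a + 1) b) +
        if b < a then #(ballotPairs s a (b + 1)) + #(ballotPairs s (a + 1) (b + 1)) else 0 := by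
  rw [card_ballotPairs_succ, sum_product, sum_pair (singleton_ne_empty s).symm,
    sum_pair (singleton_ne_empty s).symm, sum_pair (singleton_ne_empty s).symm]
  rcases hba.lt_or_eq with h | rfl
  · simp [h, Nat.lt_add_one_iff.2 hba, add_comm, add_left_comm]
  · simp [add_comm]

lemma card_ballotPairs_succ_succ_zero (s a : ℕ) :
    #(ballotPairs (s + 1) (a + 1) 0) = #(ballotPairs s a 0) + #(ballotPairs s (a + 1) 0) := by
  rw [card_ballotPairs_succ, sum_product, sum_pair (singleton_ne_empty s).symm,
    sum_pair (singleton_ne_empty s).symm, sum_pair (singleton_ne_empty s).symm]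
  simp [add_comm]

lemma card_ballotPairs_formula_step {m a b : ℕ}
    (ih₀ : ∀ a, #(ballotPairs (m + 1) (a + 1) 0) = m.choose a)
    (ih₁ : ∀ a b, b ≤ a → #(ballotPairs (m + 1) (a + 1) (b + 1)) +
      (m + 1).choose b * m.choose (a + 1) = m.choose a * (m + 1).choose (b + 1))
    (hba : b ≤ a) :
    #(ballotPairs (m + 2) (a + 1) (b + 1)) + (m + 2).choose b * (m + 1).choose (a + 1) =
      (m + 1).choose a * (m + 2).choose (b + 1) := by
  rw [card_ballotPairs_succ_succ_succ (m + 1) hba]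
  rcases hba.lt_or_eq with hlt | rfl
  · rw [if_pos hlt]
    obtain ⟨a, rfl⟩ : ∃ a', a = a' + 1 := ⟨a - 1, by omega⟩
    rcases b with _ | b
    · have h1 := ih₀ a
      have h2 := ih₀ (a + 1)
      have h3 := ih₁ a 0 (by omega)
      have h4 := ih₁ (a + 1) 0 (by omega)
      simp only [Nat.choose_succ_succ, Nat.choose_zero_right] at h3 h4 ⊢
      zify at h1 h2 h3 h4 ⊢
      linear_combination h1 + h2 + h3 + h4
    · have h1 := ih₁ a b (by omega)
      have h2 := ih₁ (a + 1) b (by omega)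
      have h3 := ih₁ a (b + 1) (by omega)
      have h4 := ih₁ (a + 1) (b + 1) (by omega)
      simp only [Nat.choose_succ_succ] at h1 h2 h3 h4 ⊢
      zify at h1 h2 h3 h4 ⊢
      linear_combination h1 + h2 + h3 + h4
  · rw [if_neg (lt_irrefl _)]
    rcases b with _ | a
    · simp [ballotPairs_zero_left (Nat.succ_pos m), ih₀ 0, Nat.choose_succ_succ]
    · have h1 := ih₁ a a le_rfl
      have h2 := ih₁ (a + 1) a (by omega)
      simp only [Nat.choose_succ_succ] at h1 h2 ⊢
      zify at h1 h2 ⊢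
      linear_combination h1 + h2

/-- The ballot (reflection) formula for `ballotPairs`, in subtraction-free form. -/
lemma card_ballotPairs_formula (m : ℕ) :
    (∀ a, #(ballotPairs (m + 1) (a + 1) 0) = m.choose a) ∧
    ∀ a b, b ≤ a → #(ballotPairs (m + 1) (a + 1) (b + 1)) + (m + 1).choose b * m.choose (a + 1) =
      m.choose a * (m + 1).choose (b + 1) := by
  induction m with
  | zero =>
    refine ⟨fun a => ?_, fun a b hba => ?_⟩
    · rw [card_ballotPairs_succ_succ_zero, card_ballotPairs_zero, card_ballotPairs_zero]
      cases a <;> simp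
    · rw [card_ballotPairs_succ_succ_succ 0 hba]
      rcases Nat.eq_zero_or_pos a with rfl | ha
      · obtain rfl : b = 0 := by omega
        simp [card_ballotPairs_zero]
      · simp [card_ballotPairs_zero, Nat.choose_succ_succ, Nat.choose_eq_zero_of_lt ha, ha.ne']
  | succ m ih =>
    obtain ⟨ih₀, ih₁⟩ := ih
    refine ⟨fun a => ?_, fun a b hba => card_ballotPairs_formula_step ih₀ ih₁ hba⟩
    rw [card_ballotPairs_succ_succ_zero]
    cases a with
    | zero => simp [ballotPairs_zero_left (Nat.succ_pos m), ih₀ 0]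
    | succ a => rw [ih₀ a, ih₀ (a + 1), Nat.choose_succ_succ]

lemma card_ballotPairs_diag {s k : ℕ} (hk : 1 ≤ k) (hks : k ≤ s) :
    s * #(ballotPairs s k k) = s.choose k * s.choose (k - 1) := by
  obtain ⟨m, rfl⟩ : ∃ m, s = m + 1 := ⟨s - 1, by omega⟩
  obtain ⟨j, rfl⟩ : ∃ j, k = j + 1 := ⟨k - 1, by omega⟩
  have hformula := (card_ballotPairs_formula m).2 j j le_rfl
  have hA := Nat.add_one_mul_choose_eq m j
  have hB := Nat.add_one_mul_choose_eq m (j + 1)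
  have hC := Nat.choose_succ_right_eq (m + 1) (j + 1)
  have hD := Nat.choose_succ_right_eq (m + 1) j
  rw [show m + 1 - (j + 1) = m - j by omega] at hC
  rw [show m + 1 - j = m - j + 1 by omega] at hD
  rw [Nat.add_sub_cancel]
  zify at hformula hA hB hC hD ⊢
  linear_combination ((m : ℤ) + 1) * hformula + ((m + 1).choose (j + 1) : ℤ) * hA
    - ((m + 1).choose j : ℤ) * hB - ((m + 1).choose j : ℤ) * hC
    + ((m + 1).choose (j + 1) : ℤ) * hD

lemma card_ballotPairs_diag_le {n a : ℕ} (ha : a ≤ n) :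
    n * #(ballotPairs n a a) ≤ n.choose a * n.choose (a - 1) := by
  rcases Nat.eq_zero_or_pos a with rfl | ha0
  · rcases Nat.eq_zero_or_pos n with rfl | hn
    · simp
    · simp [ballotPairs_zero_left hn]
  · exact (card_ballotPairs_diag ha0 ha).le

/-- `N(n, k)`; since `k - 1` truncates, `narayana n 0 = 1 / n` rather than `0`. -/
noncomputable def narayana (n k : ℕ) : ℝ := 1 / n * n.choose k * n.choose (k - 1)

lemma card_ballotPairs_le_narayana {n a : ℕ} (hn : 0 < n) (ha : a ≤ n) :
    (#(ballotPairs n a a) : ℝ) ≤ narayana n a := by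
  have hn' : (0 : ℝ) < n := by exact_mod_cast hn
  rw [narayana, one_div_mul_eq_div, div_mul_eq_mul_div, le_div_iff₀ hn', mul_comm]
  exact_mod_cast card_ballotPairs_diag_le ha

lemma ncard_dyckSet_eq_narayana {s k : ℕ} (hk : 1 ≤ k) (hks : k ≤ s) :
    ((dyckSet s k).ncard : ℝ) = narayana s k := by
  have hs : (0 : ℝ) < s := by exact_mod_cast (show 0 < s by omega)
  rw [ncard_dyckSet, narayana, one_div_mul_eq_div, div_mul_eq_mul_div, eq_div_iff hs.ne', mul_comm]
  exact_mod_cast card_ballotPairs_diag hk hks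

def skipBlock (j η x : ℕ) : ℕ := if x < j then x else x + η

lemma skipBlock_injective (j η : ℕ) : Function.Injective (skipBlock j η) := by
  intro x y h
  unfold skipBlock at h
  split_ifs at h <;> omega

/-- Renumbers `X ⊆ range s` after deleting the 2-steps `j, …, j + η - 1`. -/
def compress (s η j : ℕ) (X : Finset ℕ) : Finset ℕ :=
  {x ∈ range (s - η) | skipBlock j η x ∈ X}

section Compress

variable {s η j : ℕ} {X : Finset ℕ}

lemma image_skipBlock_compress (hX : X ⊆ range s) (hj : j + η ≤ s) :
    (compress s η j X).image (skipBlock j η) = X \ Ico j (j + η) := by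
  ext y
  have hy := @hX y
  simp only [compress, mem_image, mem_filter, mem_range, mem_sdiff, mem_Ico] at hy ⊢
  simp only [skipBlock]
  constructor
  · rintro ⟨x, ⟨hx, hxX⟩, rfl⟩
    split_ifs at hxX ⊢ <;> exact ⟨hxX, by omega⟩
  · rintro ⟨hyX, hy'⟩
    have := hy hyX
    by_cases hyj : y < j
    · exact ⟨y, ⟨by omega, by rwa [if_pos hyj]⟩, if_pos hyj⟩
    · refine ⟨y - η, ⟨by omega, ?_⟩, ?_⟩ <;> rw [if_neg (by omega), Nat.sub_add_cancel (by omega)]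
      exact hyX

lemma card_compress_add (hX : X ⊆ range s) (hB : Ico j (j + η) ⊆ X) (hj : j + η ≤ s) :
    #(compress s η j X) + η = #X := by
  rw [← card_image_of_injective _ (skipBlock_injective j η), image_skipBlock_compress hX hj,
    card_sdiff_of_subset hB, Nat.card_Ico, Nat.add_sub_cancel_left]
  have := card_le_card hB
  rw [Nat.card_Ico, Nat.add_sub_cancel_left] at this
  omega

lemma compress_inter_range_of_le (htj : t ≤ j) (hts : t ≤ s - η) :
    compress s η j X ∩ range t = X ∩ range t := by
  ext x
  simp only [compress, mem_inter, mem_filter, mem_range]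
  simp only [skipBlock]
  constructor
  · rintro ⟨⟨-, hx⟩, hxt⟩
    rw [if_pos (by omega)] at hx
    exact ⟨hx, hxt⟩
  · rintro ⟨hx, hxt⟩
    exact ⟨⟨by omega, by rwa [if_pos (by omega)]⟩, hxt⟩

lemma compress_inter_range (hts : t ≤ s - η) :
    compress s η j X ∩ range t = compress (t + η) η j (X ∩ range (t + η)) := by
  ext x
  simp only [compress, mem_inter, mem_filter, mem_range, Nat.add_sub_cancel]
  simp only [skipBlock]
  grind

end Compress

lemma compress_injOn {s η j : ℕ} {X Y : Finset ℕ} (hX : X ⊆ range s) (hY : Y ⊆ range s)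
    (hBX : Ico j (j + η) ⊆ X) (hBY : Ico j (j + η) ⊆ Y) (hj : j + η ≤ s)
    (h : compress s η j X = compress s η j Y) : X = Y := by
  have hsdiff := image_skipBlock_compress hX hj
  rw [h, image_skipBlock_compress hY hj] at hsdiff
  rw [← sdiff_union_of_subset hBX, ← sdiff_union_of_subset hBY, hsdiff]

lemma isBallot_compress {s η j : ℕ} {U D : Finset ℕ}
    (hBU : Ico j (j + η) ⊆ U) (hBD : Ico j (j + η) ⊆ D) (hj : j + η ≤ s) (h : IsBallot s U D) :
    IsBallot (s - η) (compress s η j U) (compress s η j D) := by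
  intro t ht
  rcases lt_or_ge t j with htj | hjt
  · rw [compress_inter_range_of_le htj.le (by omega), compress_inter_range_of_le htj (by omega)]
    exact h t (by omega)
  · rw [compress_inter_range (by omega), compress_inter_range (by omega)]
    have hblock {X : Finset ℕ} (n : ℕ) (hBX : Ico j (j + η) ⊆ X) (hn : j + η ≤ n) :
        Ico j (j + η) ⊆ X ∩ range n :=
      subset_inter hBX fun x hx => mem_range.2 ((mem_Ico.1 hx).2.trans_le hn)
    have hD' := card_compress_add inter_subset_right (hblock (t + η) hBD (by omega))
      (by omega : j + η ≤ t + η)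
    have hU' := card_compress_add inter_subset_right (hblock (t + 1 + η) hBU (by omega))
      (by omega : j + η ≤ t + 1 + η)
    have := h (t + η) (by omega)
    rw [show t + η + 1 = t + 1 + η by ring] at this
    omega

def HasUDBlockAt (s η j : ℕ) (f : ℕ → Bool) : Prop :=
  j + η ≤ s ∧ ∀ i < η, f (2 * (j + i)) = true ∧ f (2 * (j + i) + 1) = false

lemma Ico_subset_upSteps_and_downSteps {s η j : ℕ} {f : ℕ → Bool} (h : HasUDBlockAt s η j f) :
    Ico j (j + η) ⊆ upSteps s f ∧ Ico j (j + η) ⊆ downSteps s f := by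
  obtain ⟨hj, hblock⟩ := h
  constructor <;> intro x hx <;> rw [mem_Ico] at hx <;>
    obtain ⟨i, hi, rfl⟩ : ∃ i < η, x = j + i := ⟨x - j, by omega, by omega⟩
  · exact mem_filter.2 ⟨mem_range.2 (by omega), (hblock i hi).1⟩
  · exact mem_filter.2 ⟨mem_range.2 (by omega), (hblock i hi).2⟩

lemma ncard_hasUDBlockAt_le (s k η j : ℕ) :
    {f ∈ dyckSet s k | HasUDBlockAt s η j f}.ncard ≤ #(ballotPairs (s - η) (k - η) (k - η)) := by
  rw [← Set.ncard_coe_finset]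
  refine Set.ncard_le_ncard_of_injOn
    (fun f => (compress s η j (upSteps s f), compress s η j (downSteps s f))) ?_ ?_
  · rintro f ⟨hf, hblock⟩
    obtain ⟨-, hp⟩ := mem_dyckSet_iff.1 hf
    obtain ⟨hU, hD, hcU, hcD, hb⟩ := mem_ballotPairs.1 hp
    obtain ⟨hBU, hBD⟩ := Ico_subset_upSteps_and_downSteps hblock
    have := card_compress_add hU hBU hblock.1
    have := card_compress_add hD hBD hblock.1
    refine mem_coe.2 (mem_ballotPairs.2 ⟨filter_subset _ _, filter_subset _ _, ?_, ?_,
      isBallot_compress hBU hBD hblock.1 hb⟩) <;> dsimp only [stepSets] at * <;> omega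
  · rintro f ⟨hf, hblockf⟩ g ⟨hg, hblockg⟩ h
    simp only [Prod.mk.injEq] at h
    obtain ⟨hBUf, hBDf⟩ := Ico_subset_upSteps_and_downSteps hblockf
    obtain ⟨hBUg, hBDg⟩ := Ico_subset_upSteps_and_downSteps hblockg
    refine injOn_stepSets s k hf hg (Prod.ext ?_ ?_)
    · exact compress_injOn (filter_subset _ _) (filter_subset _ _) hBUf hBUg hblockf.1 h.1
    · exact compress_injOn (filter_subset _ _) (filter_subset _ _) hBDf hBDg hblockf.1 h.2

lemma ncard_hasConsecUD_le (s k η : ℕ) :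
    {f ∈ dyckSet s k | hasConsecUD s η f}.ncard ≤
      (s + 1) * #(ballotPairs (s - η) (k - η) (k - η)) := by
  have hunion : {f ∈ dyckSet s k | hasConsecUD s η f} =
      ⋃ j ∈ range (s + 1), {f ∈ dyckSet s k | HasUDBlockAt s η j f} := by
    ext f
    simp only [hasConsecUD, HasUDBlockAt, Set.mem_ofPred_eq, Set.mem_iUnion, mem_range,
      exists_prop]
    constructor
    · rintro ⟨hf, j, hj⟩
      exact ⟨j, by omega, hf, hj⟩
    · rintro ⟨j, -, hf, hj⟩
      exact ⟨hf, j, hj⟩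
  rw [hunion]
  calc _ ≤ ∑ j ∈ range (s + 1), {f ∈ dyckSet s k | HasUDBlockAt s η j f}.ncard :=
        set_ncard_biUnion_le _ _
    _ ≤ ∑ _j ∈ range (s + 1), #(ballotPairs (s - η) (k - η) (k - η)) :=
        sum_le_sum fun j _ => ncard_hasUDBlockAt_le s k η j
    _ = _ := by rw [sum_const, card_range, smul_eq_mul]

lemma choose_sub_sub_le_pow_mul_choose {s k η : ℕ} (hηk : η ≤ k) (hks : k ≤ s) :
    ((s - η).choose (k - η) : ℝ) ≤ ((k : ℝ) / s) ^ η * s.choose k := by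
  induction η with
  | zero => simp
  | succ η ih =>
    obtain ⟨n, hn⟩ : ∃ n, s - η = n + 1 := ⟨s - η - 1, by omega⟩
    obtain ⟨r, hr⟩ : ∃ r, k - η = r + 1 := ⟨k - η - 1, by omega⟩
    rw [show s - (η + 1) = n by omega, show k - (η + 1) = r by omega]
    have hs : (0 : ℝ) < s := by exact_mod_cast (show 0 < s by omega)
    have hpascal : ((n + 1 : ℕ) : ℝ) * n.choose r = (n + 1).choose (r + 1) * ((r + 1 : ℕ) : ℝ) := by
      exact_mod_cast Nat.add_one_mul_choose_eq n r
    have hstep : (s : ℝ) * ((r + 1 : ℕ) : ℝ) ≤ k * ((n + 1 : ℕ) : ℝ) := by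
      rw [← hn, ← hr, Nat.cast_sub (by omega), Nat.cast_sub (by omega)]
      have : (η : ℝ) * k ≤ η * s := by gcongr
      nlinarith
    have hchoose : (n.choose r : ℝ) ≤ k / s * (n + 1).choose (r + 1) := by
      rw [div_mul_eq_mul_div, le_div_iff₀ hs]
      refine le_of_mul_le_mul_right ?_ (show (0 : ℝ) < ((n + 1 : ℕ) : ℝ) by positivity)
      calc (n.choose r : ℝ) * s * ((n + 1 : ℕ) : ℝ)
          = (n + 1).choose (r + 1) * (s * ((r + 1 : ℕ) : ℝ)) := by
            linear_combination (s : ℝ) * hpascal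
        _ ≤ (n + 1).choose (r + 1) * (k * ((n + 1 : ℕ) : ℝ)) := by gcongr
        _ = _ := by ring
    calc (n.choose r : ℝ) ≤ k / s * (n + 1).choose (r + 1) := hchoose
      _ ≤ k / s * ((k / s) ^ η * s.choose k) := by
        gcongr
        rw [← hn, ← hr]
        exact ih (by omega)
      _ = _ := by ring

lemma choose_pred_le_choose_succ (n r : ℕ) : n.choose (r - 1) ≤ (n + 1).choose r := by
  cases r with
  | zero => simp
  | succ r => simp [Nat.choose_succ_succ]

lemma lt_of_cast_le_mul_of_lt_one {α : ℝ} {k s : ℕ} (hα1 : α < 1) (hk0 : 0 < k)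
    (hk : (k : ℝ) ≤ α * s) : k < s := by
  have hk0' : (0 : ℝ) < k := by exact_mod_cast hk0
  have hs : (0 : ℝ) < s := by
    rcases Nat.eq_zero_or_pos s with rfl | hs
    · rw [Nat.cast_zero, mul_zero] at hk
      linarith
    · exact_mod_cast hs
  by_contra! h
  have : (s : ℝ) ≤ k := by exact_mod_cast h
  linarith [mul_pos (sub_pos.2 hα1) hs]

lemma narayana_sub_le {α : ℝ} (hα0 : 0 < α) (hα1 : α < 1) {s k η : ℕ} (hη : 1 ≤ η)
    (hηk : η ≤ k) (hk : (k : ℝ) ≤ α * s) :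
    narayana (s - η) (k - η) ≤ (α * (1 - α))⁻¹ * α ^ (2 * η) * narayana s k := by
  have hks := lt_of_cast_le_mul_of_lt_one hα1 (by omega) hk
  have hs : (0 : ℝ) < s := by exact_mod_cast (show 0 < s by omega)
  have hratio : (k : ℝ) / s ≤ α := by rwa [div_le_iff₀ hs]
  have hratio' : ((k - 1 : ℕ) : ℝ) / s ≤ α :=
    le_trans (by gcongr; exact_mod_cast Nat.sub_le k 1) hratio
  have h₁ : ((s - η).choose (k - η) : ℝ) ≤ α ^ η * s.choose k :=
    (choose_sub_sub_le_pow_mul_choose hηk hks.le).trans (by gcongr)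
  have h₂ : ((s - η).choose (k - η - 1) : ℝ) ≤ α ^ (η - 1) * s.choose (k - 1) :=
    calc ((s - η).choose (k - η - 1) : ℝ) ≤ (s - (η - 1)).choose ((k - 1) - (η - 1)) := by
          rw [show s - (η - 1) = s - η + 1 by omega, show k - 1 - (η - 1) = k - η by omega]
          exact_mod_cast choose_pred_le_choose_succ _ _
      _ ≤ (((k - 1 : ℕ) : ℝ) / s) ^ (η - 1) * s.choose (k - 1) :=
          choose_sub_sub_le_pow_mul_choose (by omega) (by omega)
      _ ≤ α ^ (η - 1) * s.choose (k - 1) := by gcongr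
  have h₃ : 1 / ((s - η : ℕ) : ℝ) ≤ (1 - α)⁻¹ * (1 / s) := by
    have : (1 - α) * s ≤ ((s - η : ℕ) : ℝ) := by
      rw [Nat.cast_sub (by omega)]
      have : (η : ℝ) ≤ k := by exact_mod_cast hηk
      linarith
    rw [← one_div, div_mul_div_comm, one_mul]
    exact one_div_le_one_div_of_le (by have := sub_pos.2 hα1; positivity) this
  calc narayana (s - η) (k - η)
      ≤ (1 - α)⁻¹ * (1 / s) * (α ^ η * s.choose k) * (α ^ (η - 1) * s.choose (k - 1)) := by
        unfold narayana
        gcongr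
    _ = (α * (1 - α))⁻¹ * α ^ (2 * η) * narayana s k := by
        rw [show 2 * η = η + (η - 1) + 1 by omega, narayana]
        field_simp
        ring

/-- Under the uniform measure on Dyck paths of length `2 s_N` with `k ≤ α s_N`
odd up-steps, the probability of containing `η_N` consecutive `UD` 2-steps is at
most `C₇ s_N² α^{2η_N} C₉`; more precisely, the corresponding ratio of Narayana
numbers satisfies `N(s_N-η_N, k-η_N)/N(s_N,k) ≤ C₉ α^{2η_N}`. -/
theorem consecutive_UD_steps_rare (α : ℝ) (hα0 : 0 < α) (hα1 : α < 1) :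
    ∃ C₇ > 0, ∃ C₉ > 0, ∀ s k η : ℕ, 1 ≤ η → η ≤ k → (k : ℝ) ≤ α * s →
      (({f ∈ dyckSet s k | hasConsecUD s η f}.ncard : ℝ)
          ≤ C₇ * (s : ℝ) ^ 2 * α ^ (2 * η) * C₉ * ((dyckSet s k).ncard : ℝ)) ∧
      ((1 / ((s - η : ℕ) : ℝ)) * ((s - η).choose (k - η) : ℝ) *
            ((s - η).choose (k - η - 1) : ℝ)
          ≤ C₉ * α ^ (2 * η) *
            ((1 / (s : ℝ)) * (s.choose k : ℝ) * (s.choose (k - 1) : ℝ))) := by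
  have hC₉ : 0 < (α * (1 - α))⁻¹ := by have := sub_pos.2 hα1; positivity
  refine ⟨2, two_pos, _, hC₉, fun s k η hη hηk hk => ?_⟩
  have hratio := narayana_sub_le hα0 hα1 hη hηk hk
  refine ⟨?_, hratio⟩
  have hks := lt_of_cast_le_mul_of_lt_one hα1 (by omega) hk
  have hs : (1 : ℝ) ≤ s := by exact_mod_cast (show 1 ≤ s by omega)
  have hcount : ({f ∈ dyckSet s k | hasConsecUD s η f}.ncard : ℝ) ≤
      (s + 1) * #(ballotPairs (s - η) (k - η) (k - η)) := by
    exact_mod_cast ncard_hasConsecUD_le s k η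
  rw [ncard_dyckSet_eq_narayana (by omega) hks.le]
  calc _ ≤ ((s : ℝ) + 1) * ((α * (1 - α))⁻¹ * α ^ (2 * η) * narayana s k) :=
        hcount.trans (by
          gcongr
          exact (card_ballotPairs_le_narayana (by omega) (by omega)).trans hratio)
    _ ≤ 2 * (s : ℝ) ^ 2 * ((α * (1 - α))⁻¹ * α ^ (2 * η) * narayana s k) := by
        gcongr
        · unfold narayana; positivity
        · nlinarith
    _ = _ := by ring
end

section
/- In the moment expansion of sample covariance matrices, a path of type (ñ, p̃) with k odd marked instants and origin chosen freely admits at most N · (N!/∏ᵢ nᵢ!) · (p!/∏ᵢ pᵢ!) · (k!/∏_{i≥2}(i!)^{pᵢ}) · ((s_N-k)!/∏_{i≥2}(i!)^{nᵢ}) assignments of vertices to marked instants, where nᵢ (resp. pᵢ) is the number of bottom-line (resp. top-line) vertices marked exactly i times, subject to N = Σᵢ nᵢ, p = Σᵢ pᵢ, Σ_{i≥1} i·nᵢ = s_N - k, and Σ_{i≥1} i·pᵢ = k. -/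
/-!
Permutations of the domain act on the maps `f : α → β` with prescribed fiber sizes `c`
transitively (fibers of equal size can be matched bijectively) and with stabiliser of order
`∏ b, (c b)!`, so there are at most `|α|! / ∏ b, (c b)!` such maps. Maps with fiber profile
`(pᵢ)` are grouped by their fiber-size function `β → ℕ`, which itself has fiber sizes `(pᵢ)`
and so takes at most `|β|! / ∏ i, pᵢ!` values; by the first count each group has at most
`|α|! / ∏ i, (i!)^{pᵢ}` elements.
-/

open Finset Equiv
open scoped Nat

theorem Finset.prod_le_prod_of_eq_one_of_notMem {ι M : Type*} [DecidableEq ι] [CommMonoid M]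
    [Preorder M] [MulLeftMono M] {s t : Finset ι} {g : ι → M}
    (h : ∀ i ∈ s, i ∉ t → g i = 1) (hg : ∀ i ∈ t, 1 ≤ g i) :
    ∏ i ∈ s, g i ≤ ∏ i ∈ t, g i :=
  calc ∏ i ∈ s, g i = ∏ i ∈ s ∩ t, g i :=
        (prod_subset inter_subset_left fun i hs hst =>
          h i hs fun ht => hst (mem_inter.2 ⟨hs, ht⟩)).symm
    _ ≤ ∏ i ∈ t, g i := prod_le_prod_of_subset_of_one_le' inter_subset_right fun i ht _ => hg i ht

section FiberSizes

variable {α β : Type*} [Fintype α] [DecidableEq β]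

theorem exists_perm_comp_eq_of_card_fiber_eq {f g : α → β}
    (h : ∀ b, #{a | f a = b} = #{a | g a = b}) : ∃ τ : Perm α, f ∘ τ = g := by
  have e : ∀ b, {a // g a = b} ≃ {a // f a = b} := fun b =>
    Fintype.equivOfCardEq (by simp only [Fintype.card_subtype, h])
  exact ⟨(sigmaFiberEquiv g).symm.trans ((sigmaCongrRight e).trans (sigmaFiberEquiv f)),
    funext fun a => (e (g a) ⟨a, rfl⟩).2⟩

theorem card_mul_prod_factorial_le_of_card_fiber_eq {F : Finset (α → β)} {c : β → ℕ}
    (hF : ∀ f ∈ F, ∀ b, #{a | f a = b} = c b) (s : Finset β) :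
    #F * ∏ b ∈ s, (c b)! ≤ (Fintype.card α)! := by
  classical
  obtain rfl | ⟨f₀, hf₀⟩ := F.eq_empty_or_nonempty
  · simp
  have hτ : ∀ f ∈ F, ∃ τ : Perm α, f₀ ∘ τ = f := fun f hf =>
    exists_perm_comp_eq_of_card_fiber_eq fun b => by rw [hF f₀ hf₀, hF f hf]
  choose! τ hτ using hτ
  let stab : Finset (Perm α) := {σ | f₀ ∘ ⇑σ = f₀}
  have hstab : ∏ b ∈ s, (c b)! ≤ #stab := by
    rw [← Fintype.card_subtype, DomMulAct.stabilizer_card']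
    simp only [Fintype.card_subtype, hF f₀ hf₀]
    refine prod_le_prod_of_eq_one_of_notMem (fun b _ hb => ?_) fun _ _ => Nat.factorial_pos _
    rw [← hF f₀ hf₀, card_eq_zero.2 (by simpa [filter_eq_empty_iff] using hb), Nat.factorial_zero]
  have hrecover : ∀ f ∈ F, ∀ σ ∈ stab, f₀ ∘ ⇑(σ * τ f) = f := fun f hf σ hσ => by
    rw [Perm.coe_mul, ← Function.comp_assoc, (mem_filter.1 hσ).2, hτ f hf]
  have hinj : Set.InjOn (fun x : (α → β) × Perm α => x.2 * τ x.1) (F ×ˢ stab : Finset _) := by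
    rintro ⟨f, σ⟩ hfσ ⟨g, σ'⟩ hgσ' heq
    simp only [coe_product, Set.mem_prod, mem_coe] at hfσ hgσ'
    have hfg : f = g := by
      rw [← hrecover f hfσ.1 σ hfσ.2, ← hrecover g hgσ'.1 σ' hgσ'.2]
      exact congrArg _ (congrArg _ heq)
    subst hfg
    exact Prod.ext rfl (mul_right_cancel heq)
  calc #F * ∏ b ∈ s, (c b)! ≤ #(F ×ˢ stab) := by rw [card_product]; gcongr
    _ ≤ #(univ : Finset (Perm α)) := card_le_card_of_injOn _ (fun _ _ => mem_univ _) hinj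
    _ = (Fintype.card α)! := by rw [Finset.card_univ, Fintype.card_perm]

end FiberSizes

section FiberProfile

variable {α β : Type*} [Fintype α] [Fintype β] [DecidableEq β]

theorem card_fiberProfile_mul_le (pv : ℕ → ℕ) (S S' : Finset ℕ) :
    Nat.card {f : α → β // ∀ i, #{b | #{a | f a = b} = i} = pv i} * (∏ i ∈ S, (pv i)!)
        * ∏ i ∈ S', i ! ^ pv i ≤ (Fintype.card β)! * (Fintype.card α)! := by
  classical
  rw [Nat.card_eq_fintype_card, Fintype.card_subtype]
  set T : Finset (α → β) := {f | ∀ i, #{b | #{a | f a = b} = i} = pv i}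
  let κ : (α → β) → β → ℕ := fun f b => #{a | f a = b}
  have hκ : ∀ f ∈ T, ∀ i, #{b | κ f b = i} = pv i := fun f hf => (mem_filter.1 hf).2
  have outer : #(T.image κ) * ∏ i ∈ S, (pv i)! ≤ (Fintype.card β)! :=
    card_mul_prod_factorial_le_of_card_fiber_eq (by simpa using hκ) S
  have inner : ∀ c ∈ T.image κ,
      #{f ∈ T | κ f = c} * ∏ i ∈ S', i ! ^ pv i ≤ (Fintype.card α)! := by
    intro c hc
    obtain ⟨f, hfT, rfl⟩ := mem_image.1 hc
    have hprod : ∏ i ∈ S', i ! ^ pv i ≤ ∏ b, (κ f b)! := by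
      rw [prod_comp (fun i => i !) (κ f)]
      simp only [hκ f hfT]
      refine prod_le_prod_of_eq_one_of_notMem (fun i _ hi => ?_) fun _ _ =>
        pow_pos (Nat.factorial_pos _) _
      rw [← hκ f hfT, card_eq_zero.2 (by simpa [filter_eq_empty_iff] using hi), pow_zero]
    calc #{g ∈ T | κ g = κ f} * ∏ i ∈ S', i ! ^ pv i
        ≤ #{g ∈ T | κ g = κ f} * ∏ b, (κ f b)! := by gcongr
      _ ≤ (Fintype.card α)! := card_mul_prod_factorial_le_of_card_fiber_eq
          (fun g hg b => congrFun (mem_filter.1 hg).2 b) univ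
  calc #T * (∏ i ∈ S, (pv i)!) * ∏ i ∈ S', i ! ^ pv i
      = (∑ c ∈ T.image κ, #{f ∈ T | κ f = c} * ∏ i ∈ S', i ! ^ pv i) * ∏ i ∈ S, (pv i)! := by
        rw [mul_right_comm, card_eq_sum_card_image κ T, sum_mul]
    _ ≤ (#(T.image κ) * (Fintype.card α)!) * ∏ i ∈ S, (pv i)! := by
        gcongr
        exact sum_le_card_nsmul _ _ _ inner
    _ ≤ (Fintype.card β)! * (Fintype.card α)! := by
        rw [mul_right_comm]; gcongr

theorem card_fiberProfile_le {K : Type*} [Field K] [LinearOrder K] [IsStrictOrderedRing K]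
    (pv : ℕ → ℕ) (S S' : Finset ℕ) :
    (Nat.card {f : α → β // ∀ i, #{b | #{a | f a = b} = i} = pv i} : K)
      ≤ (Fintype.card β)! / (∏ i ∈ S, ((pv i)! : K))
          * ((Fintype.card α)! / ∏ i ∈ S', (i ! : K) ^ pv i) := by
  rw [div_mul_div_comm, le_div_iff₀ (by positivity), ← mul_assoc]
  exact_mod_cast card_fiberProfile_mul_le pv S S'

end FiberProfile

theorem vertex_assignment_count_bound_general (N p sN k : ℕ) (nv pv : ℕ → ℕ) :
    (N : ℚ) * (Nat.card {ab : (Fin k → Fin p) × (Fin (sN - k) → Fin N) //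
        (∀ i : ℕ, (Finset.univ.filter (fun v : Fin p =>
            (Finset.univ.filter (fun t : Fin k => ab.1 t = v)).card = i)).card = pv i) ∧
        (∀ i : ℕ, (Finset.univ.filter (fun v : Fin N =>
            (Finset.univ.filter (fun t : Fin (sN - k) => ab.2 t = v)).card = i)).card
              = nv i)} : ℚ)
      ≤ (N : ℚ) *
          ((N.factorial : ℚ) / ∏ i ∈ Finset.range (sN + 1), ((nv i).factorial : ℚ)) *
          ((p.factorial : ℚ) / ∏ i ∈ Finset.range (sN + 1), ((pv i).factorial : ℚ)) *
          ((k.factorial : ℚ) / ∏ i ∈ Finset.Icc 2 sN, ((i.factorial : ℚ)) ^ (pv i)) *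
          (((sN - k).factorial : ℚ) /
            ∏ i ∈ Finset.Icc 2 sN, ((i.factorial : ℚ)) ^ (nv i)) := by
  rw [Nat.card_congr (subtypeProdEquivProd
      (p := fun a : Fin k → Fin p => ∀ i, #{v | #{t | a t = v} = i} = pv i)
      (q := fun b : Fin (sN - k) → Fin N => ∀ i, #{v | #{t | b t = v} = i} = nv i)),
    Nat.card_prod, Nat.cast_mul]
  have htop := card_fiberProfile_le (α := Fin k) (β := Fin p) (K := ℚ) pv (range (sN + 1))
    (Icc 2 sN)
  have hbot := card_fiberProfile_le (α := Fin (sN - k)) (β := Fin N) (K := ℚ) nv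
    (range (sN + 1)) (Icc 2 sN)
  simp only [Fintype.card_fin] at htop hbot
  calc _ ≤ (N : ℚ) * ((p ! / (∏ i ∈ range (sN + 1), ((pv i)! : ℚ))
            * (k ! / ∏ i ∈ Icc 2 sN, (i ! : ℚ) ^ pv i))
          * (N ! / (∏ i ∈ range (sN + 1), ((nv i)! : ℚ))
            * ((sN - k)! / ∏ i ∈ Icc 2 sN, (i ! : ℚ) ^ nv i))) := by gcongr
    _ = _ := by ring

/-- The number of ways to assign vertices to the marked instants of a path of
type `(ñ, p̃)` (with `k` odd marked instants, `s_N - k` even marked instants)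
and to choose the origin is at most
`N · N!/∏nᵢ! · p!/∏pᵢ! · k!/∏_{i≥2}(i!)^{pᵢ} · (s_N-k)!/∏_{i≥2}(i!)^{nᵢ}`.
Here an assignment is a pair of maps from odd (resp. even) marked instants to
top (resp. bottom) vertices whose multiplicity-class sizes are given by
`p̃ = (pᵢ)` (resp. `ñ = (nᵢ)`). -/
theorem vertex_assignment_count_bound (N p sN k : ℕ) (nv pv : ℕ → ℕ)
    (hk : k ≤ sN)
    (hN : N = ∑ i ∈ Finset.range (sN + 1), nv i)
    (hp : p = ∑ i ∈ Finset.range (sN + 1), pv i)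
    (hn : ∑ i ∈ Finset.range (sN + 1), i * nv i = sN - k)
    (hpk : ∑ i ∈ Finset.range (sN + 1), i * pv i = k) :
    (N : ℚ) * (Nat.card {ab : (Fin k → Fin p) × (Fin (sN - k) → Fin N) //
        (∀ i : ℕ, (Finset.univ.filter (fun v : Fin p =>
            (Finset.univ.filter (fun t : Fin k => ab.1 t = v)).card = i)).card = pv i) ∧
        (∀ i : ℕ, (Finset.univ.filter (fun v : Fin N =>
            (Finset.univ.filter (fun t : Fin (sN - k) => ab.2 t = v)).card = i)).card
              = nv i)} : ℚ)
      ≤ (N : ℚ) *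
          ((N.factorial : ℚ) / ∏ i ∈ Finset.range (sN + 1), ((nv i).factorial : ℚ)) *
          ((p.factorial : ℚ) / ∏ i ∈ Finset.range (sN + 1), ((pv i).factorial : ℚ)) *
          ((k.factorial : ℚ) / ∏ i ∈ Finset.Icc 2 sN, ((i.factorial : ℚ)) ^ (pv i)) *
          (((sN - k).factorial : ℚ) /
            ∏ i ∈ Finset.Icc 2 sN, ((i.factorial : ℚ)) ^ (nv i)) :=
  vertex_assignment_count_bound_general N p sN k nv pv
end
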